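/- arXiv:2511.10328 — 3 statements merged into one kernel-verified Lean document; each statement's English description precedes it below -/
import Mathlib

section
/- The set k⁻¹(3) is not a G_δ subset of ℝ (it is not a countable intersection of open sets). -/
open Filter Set MeasureTheory Topology
open scoped ENNReal NNReal

noncomputable section

/-- A dimension function: positive on `(0,∞)`, nondecreasing, right-continuous,
with `h r → 0` as `r → 0⁺`. -/
def DimensionFunction (h : ℝ → ℝ) : Prop :=
  (∀ r : ℝ, 0 < r → 0 < h r) ∧ MonotoneOn h (Set.Ioi (0 : ℝ)) ∧
    (∀ r : ℝ, 0 < r → ContinuousWithinAt h (Set.Ici r) r) ∧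
    Tendsto h (nhdsWithin 0 (Set.Ioi 0)) (nhds 0)

/-- The generalized Hausdorff (outer) measure `H^h` associated to a gauge function `h`. -/
def hMeas (h : ℝ → ℝ) : Measure ℝ :=
  Measure.mkMetric (fun d : ℝ≥0∞ => ENNReal.ofReal (h d.toReal))

/-- The set of rational solutions (in lowest terms) of `|x - p/q| < 1/(c q²)`. -/
def diophSols (c : ℝ) (x : ℝ) : Set ℚ :=
  {r : ℚ | |x - (r : ℝ)| < 1 / (c * (r.den : ℝ) ^ 2)}

/-- The best constant of Diophantine approximation of `x`, valued in `(0,∞]`: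
`k(x) = sup { c > 0 : |x - p/q| < 1/(c q²) has infinitely many rational solutions }`. -/
def kval (x : ℝ) : ℝ≥0∞ :=
  sSup (ENNReal.ofReal '' {c : ℝ | 0 < c ∧ (diophSols c x).Infinite})

/-- `k⁻¹(3)`, the set of irrational numbers with `k(x) = 3`. -/
def kinv3 : Set ℝ := {x : ℝ | Irrational x ∧ kval x = 3}

/-- `x` is attainable: `|x - p/q| ≤ 1/(3 q²)` has infinitely many rational solutions. -/
def Attainable (x : ℝ) : Prop :=
  {r : ℚ | |x - (r : ℝ)| ≤ 1 / (3 * (r.den : ℝ) ^ 2)}.Infinite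

/-- Value of a finite continued fraction `[a₀; a₁, …, aₙ]`. -/
def cfListVal : List ℕ → ℝ
  | [] => 0
  | a :: l => (a : ℝ) + 1 / cfListVal l

/-- Value of the infinite continued fraction `[a 0; a 1, a 2, …]`. -/
def cfVal (a : ℕ → ℕ) : ℝ :=
  limUnder atTop (fun n => cfListVal ((List.range (n + 1)).map a))

/-- Value of the infinite continued fraction `[0; b 1, b 2, …]`. -/
def cfVal01 (b : ℕ → ℕ) : ℝ :=
  cfVal (fun n => if n = 0 then 0 else b n)

/-- `λ_i(a) = [a_i; a_{i+1}, a_{i+2}, …] + [0; a_{i-1}, a_{i-2}, …]` for a bi-infinite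
sequence `a`. -/
def lambdaZ (i : ℤ) (a : ℤ → ℕ) : ℝ :=
  cfVal (fun n => a (i + n)) + cfVal01 (fun n => a (i - n))

/-- The subshift `Σ_t` of bi-infinite sequences of positive integers with
`sup_n λ_n(a) ≤ t`. -/
def SigmaT (t : ℝ) : Set (ℤ → ℕ) :=
  {a | (∀ n, 0 < a n) ∧ ∀ i : ℤ, lambdaZ i a ≤ t}

/-- `Σ(t, n)`: length-`n` words over the positive integers occurring as subwords of
sequences in `Σ_t`. -/
def SigmaWords (t : ℝ) (n : ℕ) : Set (Fin n → ℕ) :=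
  {w | ∃ a ∈ SigmaT t, ∃ i : ℤ, ∀ j : Fin n, w j = a (i + (j : ℤ))}

/-- The set `K_t`: numbers `[0; a 1, a 2, …] ∈ [0,1]` whose sequence of partial quotients
extends to a bi-infinite sequence of positive integers with `λ_k ≤ t` for all `k ∈ ℤ`. -/
def Kt (t : ℝ) : Set ℝ :=
  {x | x ∈ Set.Icc (0 : ℝ) 1 ∧ ∃ a : ℤ → ℕ, (∀ n, 0 < a n) ∧
    x = cfVal01 (fun j : ℕ => a (j : ℤ)) ∧ ∀ i : ℤ, lambdaZ i a ≤ t}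

/-- Concatenation of the blocks `1^{e 1} 2 2 1^{e 2} 2 2 ⋯ 1^{e i} 2 2`. -/
def blockList (e : ℕ → ℕ) : ℕ → List ℕ
  | 0 => []
  | i + 1 => blockList e i ++ (List.replicate (e (i + 1)) 1 ++ [2, 2])

/-- The `n`-th (0-indexed) partial quotient of `[0; 1^{e 1}, 2, 2, 1^{e 2}, 2, 2, …]`. -/
def quotSeq (e : ℕ → ℕ) (n : ℕ) : ℕ := (blockList e (n + 1)).getD n 1

/-- `Γ_h(r) = r · inf_{0 < s ≤ r} h(s)/s`. -/
def GammaH (h : ℝ → ℝ) (r : ℝ) : ℝ :=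
  r * sInf ((fun s => h s / s) '' Set.Ioc 0 r)

/-!
Baire: a dense `G_δ` subset of `ℝ` is residual, and so is the set of Liouville numbers, on which
`k = ∞`. Hence it suffices that `k⁻¹(3)` is dense.

For `x = [a₀; a₁, …]` with convergents `p_m / q_m` one has `|x - p_m / q_m| = 1 / (λ_m q_m²)`
with `λ_m = [a_{m+1}; a_{m+2}, …] + [0; a_m, …, a₁]`, and by Legendre's theorem only convergents
matter for constants `c ≥ 2`; so `k(x) = limsup λ_m`. Along `1³ 2 2 1⁴ 2 2 1⁵ 2 2 …` the tails and
the ratios `q_m / q_{m-1}` at the ends of the runs of `1`s tend to the golden ratio `φ`, so `λ_m`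
tends to `φ² + φ⁻² = 3` just before each `2` and stays below `5/2` before each `1`: `k(x) = 3`.
Prefixing this word with the expansion of a rational `r > 1` and one large partial quotient
gives such numbers arbitrarily close to `r`.
-/

theorem Set.infinite_of_forall_exists_lt_den {S : Set ℚ} (h : ∀ N : ℕ, ∃ r ∈ S, N < r.den) :
    S.Infinite := fun hS => by
  obtain ⟨N, hN⟩ := (hS.image Rat.den).bddAbove
  obtain ⟨r, hr, hlt⟩ := h N
  exact hlt.not_ge (hN ⟨r, hr, rfl⟩)

theorem kval_eq_ofReal {x k : ℝ} (hinf : ∀ c, 0 < c → c < k → (diophSols c x).Infinite)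
    (hfin : ∀ c, k < c → (diophSols c x).Finite) : kval x = ENNReal.ofReal k := by
  refine le_antisymm (sSup_le ?_) (le_of_forall_lt fun b hb => ?_)
  · rintro _ ⟨c, ⟨-, hc⟩, rfl⟩
    exact ENNReal.ofReal_le_ofReal (not_lt.mp fun hkc => hc (hfin c hkc))
  · obtain ⟨c, -, hbc, hck⟩ := ENNReal.lt_iff_exists_real_btwn.mp hb
    have hc : 0 < c := ENNReal.ofReal_pos.mp ((zero_le (α := ℝ≥0∞)).trans_lt hbc)
    have hck' : c < k := (ENNReal.ofReal_lt_ofReal_iff_of_nonneg hc.le).mp hck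
    exact hbc.trans_le (le_sSup ⟨c, ⟨hc, hinf c hc hck'⟩, rfl⟩)

theorem Set.infinite_of_irrational_mem_closure {S : Set ℚ} {x : ℝ} (hx : Irrational x)
    (h : x ∈ closure ((↑) '' S : Set ℝ)) : S.Infinite := fun hS => by
  rw [(hS.image _).isClosed.closure_eq] at h
  obtain ⟨r, -, rfl⟩ := h
  exact hx ⟨r, rfl⟩

theorem Liouville.diophSols_infinite {x : ℝ} (hx : Liouville x) {c : ℝ} (hc : 0 < c) :
    (diophSols c x).Infinite := by
  refine Set.infinite_of_irrational_mem_closure hx.irrational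
    (Metric.mem_closure_iff.mpr fun ε hε => ?_)
  obtain ⟨n, hn⟩ := pow_unbounded_of_one_lt (max c ε⁻¹) (one_lt_two (α := ℝ))
  obtain ⟨p, q, hq, -, hpq⟩ := hx (n + 2)
  have hq' : (2 : ℝ) ≤ q := by exact_mod_cast hq
  have hden : (((p / q : ℚ)).den : ℝ) ≤ q := by
    have := Int.le_of_dvd (by omega) (Rat.den_dvd p q)
    rw [Rat.divInt_eq_div] at this
    exact_mod_cast this
  have hpow : (2 : ℝ) ^ n ≤ (q : ℝ) ^ n := pow_le_pow_left₀ (by norm_num) hq' n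
  have hdpos : (0 : ℝ) < ((p / q : ℚ)).den := by exact_mod_cast Rat.pos _
  have hcast : ((p / q : ℚ) : ℝ) = p / q := by push_cast; rfl
  refine ⟨((p / q : ℚ) : ℝ), ⟨p / q, ?_, rfl⟩, ?_⟩
  · rw [diophSols, Set.mem_ofPred_eq, hcast]
    refine hpq.trans_le (one_div_le_one_div_of_le (by positivity) ?_)
    rw [pow_add]
    gcongr
    linarith [le_max_left c ε⁻¹]
  · rw [Real.dist_eq, hcast]
    calc |x - p / q| < 1 / (q : ℝ) ^ (n + 2) := hpq
      _ ≤ 1 / 2 ^ n := one_div_le_one_div_of_le (by positivity)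
          (hpow.trans (pow_le_pow_right₀ (by linarith) (by omega)))
      _ < ε := by rw [one_div]; exact inv_lt_of_inv_lt₀ hε ((le_max_right _ _).trans_lt hn)

theorem Liouville.three_lt_kval {x : ℝ} (hx : Liouville x) : 3 < kval x := by
  calc (3 : ℝ≥0∞) < ENNReal.ofReal 4 := by norm_num
    _ ≤ kval x := le_sSup ⟨4, ⟨by norm_num, hx.diophSols_infinite (by norm_num)⟩, rfl⟩

theorem diophSols_add_intCast (c x : ℝ) (z : ℤ) :
    diophSols c (x + z) = (· + (z : ℚ)) '' diophSols c x := by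
  ext r
  refine ⟨fun h => ⟨r - z, ?_, sub_add_cancel r _⟩, ?_⟩
  · simp only [diophSols, Set.mem_ofPred_eq, Rat.sub_intCast_den] at h ⊢
    convert h using 2
    push_cast
    ring
  · rintro ⟨s, hs, rfl⟩
    simp only [diophSols, Set.mem_ofPred_eq, Rat.add_intCast_den] at hs ⊢
    convert hs using 2
    push_cast
    ring

theorem kval_add_intCast (x : ℝ) (z : ℤ) : kval (x + z) = kval x := by
  simp only [kval, diophSols_add_intCast, Set.infinite_image_iff (add_left_injective _).injOn]

namespace ContinuedFraction

open scoped goldenRatio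

variable {a : ℕ → ℕ} {L : ℕ}

def shift (a : ℕ → ℕ) : ℕ → ℕ := fun n => a (n + 1)

theorem shift_iterate_apply (a : ℕ → ℕ) (k n : ℕ) : shift^[k] a n = a (n + k) := by
  induction k generalizing a with
  | zero => rfl
  | succ k ih => rw [Function.iterate_succ_apply, ih]; rfl

theorem one_le_shift (ha : ∀ n, 1 ≤ a n) : ∀ n, 1 ≤ shift a n := fun n => ha (n + 1)

theorem one_le_shift_iterate (ha : ∀ n, 1 ≤ a n) (k : ℕ) : ∀ n, 1 ≤ shift^[k] a n :=
  fun n => shift_iterate_apply a k n ▸ ha (n + k)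

theorem shift_iterate_succ (a : ℕ → ℕ) (k : ℕ) : shift^[k + 1] a = shift (shift^[k] a) :=
  Function.iterate_succ_apply' shift k a

/-- Continuants, with an index shift: `numer a (n + 1) / denom a (n + 1) = [a 0; …, a n]`. -/
def numer (a : ℕ → ℕ) : ℕ → ℕ
  | 0 => 1
  | 1 => a 0
  | n + 2 => a (n + 1) * numer a (n + 1) + numer a n

def denom (a : ℕ → ℕ) : ℕ → ℕ
  | 0 => 0
  | 1 => 1
  | n + 2 => a (n + 1) * denom a (n + 1) + denom a n

theorem numer_add_two (a : ℕ → ℕ) (n : ℕ) :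
    numer a (n + 2) = a (n + 1) * numer a (n + 1) + numer a n := rfl

theorem denom_add_two (a : ℕ → ℕ) (n : ℕ) :
    denom a (n + 2) = a (n + 1) * denom a (n + 1) + denom a n := rfl

theorem numer_succ (a : ℕ → ℕ) (n : ℕ) :
    numer a (n + 1) = a 0 * numer (shift a) n + denom (shift a) n := by
  induction n using Nat.twoStepInduction with
  | zero => simp [numer, denom]
  | one => simp only [numer, denom, shift]; ring
  | more n ih₁ ih₂ =>
    rw [numer_add_two, ih₁, ih₂, numer_add_two, denom_add_two]; simp only [shift]; ring

theorem denom_succ (a : ℕ → ℕ) (n : ℕ) : denom a (n + 1) = numer (shift a) n := by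
  induction n using Nat.twoStepInduction with
  | zero => rfl
  | one => simp [numer, denom, shift]
  | more n ih₁ ih₂ => rw [denom_add_two, ih₁, ih₂, numer_add_two]; rfl

theorem one_le_denom (ha : ∀ n, 1 ≤ a n) (n : ℕ) : 1 ≤ denom a (n + 1) := by
  induction n using Nat.twoStepInduction with
  | zero => rfl
  | one => simpa [denom] using ha 1
  | more n _ ih => rw [denom_add_two]; nlinarith [ha (n + 2)]

theorem denom_le_succ (ha : ∀ n, 1 ≤ a n) (n : ℕ) : denom a (n + 1) ≤ denom a (n + 2) := by
  cases n with
  | zero => simpa [denom] using ha 1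
  | succ n =>
    show denom a (n + 2) ≤ denom a (n + 3)
    rw [denom_add_two a (n + 1)]; nlinarith [ha (n + 2)]

theorem denom_lt_succ (ha : ∀ n, 1 ≤ a n) (n : ℕ) : denom a (n + 2) < denom a (n + 3) := by
  rw [denom_add_two a (n + 1)]; nlinarith [ha (n + 2), one_le_denom ha n, one_le_denom ha (n + 1)]

theorem self_le_denom (ha : ∀ n, 1 ≤ a n) (n : ℕ) : n ≤ denom a (n + 1) := by
  induction n with
  | zero => exact Nat.zero_le _
  | succ n ih =>
    cases n with
    | zero => exact one_le_denom ha 1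
    | succ n => exact ih.trans_lt (denom_lt_succ ha n)

theorem two_pow_le_denom_mul (ha : ∀ n, 1 ≤ a n) (n : ℕ) :
    2 ^ n ≤ denom a (n + 1) * denom a (n + 2) := by
  induction n with
  | zero => simpa [denom] using ha 1
  | succ n ih =>
    have hrec : denom a (n + 3) = a (n + 2) * denom a (n + 2) + denom a (n + 1) := rfl
    have hmono := denom_le_succ ha n
    have hpos := one_le_denom ha n
    rw [hrec, pow_succ]
    nlinarith [ha (n + 2), Nat.mul_le_mul_left (denom a (n + 2)) hmono]

theorem numer_mul_denom_sub (a : ℕ → ℕ) (n : ℕ) :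
    (numer a (n + 1) : ℤ) * denom a n - numer a n * denom a (n + 1) = (-1) ^ (n + 1) := by
  induction n with
  | zero => simp [numer, denom]
  | succ n ih => push_cast [numer, denom]; rw [pow_succ, ← ih]; ring

theorem coprime_numer_denom (a : ℕ → ℕ) (n : ℕ) :
    Nat.Coprime (numer a (n + 1)) (denom a (n + 1)) := by
  rw [← Nat.isCoprime_iff_coprime]
  have h := numer_mul_denom_sub a n
  rcases neg_one_pow_eq_or ℤ (n + 1) with h1 | h1 <;> rw [h1] at h
  · exact ⟨denom a n, -numer a n, by linarith⟩
  · exact ⟨-denom a n, numer a n, by linarith⟩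

def conv (a : ℕ → ℕ) (n : ℕ) : ℚ := numer a (n + 1) / denom a (n + 1)

theorem conv_zero (a : ℕ → ℕ) : conv a 0 = a 0 := by simp [conv, numer, denom]

theorem cast_conv (a : ℕ → ℕ) (n : ℕ) :
    (conv a n : ℝ) = (numer a (n + 1) : ℝ) / denom a (n + 1) := by
  simp [conv]

theorem conv_succ (ha : ∀ n, 1 ≤ a n) (n : ℕ) :
    conv a (n + 1) = a 0 + (conv (shift a) n)⁻¹ := by
  have hnum : (1 : ℚ) ≤ numer (shift a) (n + 1) := by
    exact_mod_cast denom_succ a (n + 1) ▸ one_le_denom ha (n + 1)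
  have hden : (1 : ℚ) ≤ denom (shift a) (n + 1) := by
    exact_mod_cast one_le_denom (one_le_shift ha) n
  simp only [conv, numer_succ a (n + 1), denom_succ a (n + 1), inv_div]
  push_cast
  field_simp

theorem one_le_conv (ha : ∀ n, 1 ≤ a n) (n : ℕ) : 1 ≤ conv a n := by
  induction n generalizing a with
  | zero => rw [conv_zero]; exact_mod_cast ha 0
  | succ n ih =>
    have hinv : 0 ≤ (conv (shift a) n)⁻¹ :=
      inv_nonneg.mpr <| zero_le_one.trans (ih (one_le_shift ha))
    have : (1 : ℚ) ≤ a 0 := by exact_mod_cast ha 0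
    rw [conv_succ ha]
    linarith

theorem conv_le_add_one (ha : ∀ n, 1 ≤ a n) (n : ℕ) : conv a n ≤ a 0 + 1 := by
  cases n with
  | zero => rw [conv_zero]; linarith
  | succ n =>
    rw [conv_succ ha]
    have := inv_le_one_of_one_le₀ (one_le_conv (one_le_shift ha) n)
    linarith

theorem abs_conv_succ_sub_conv (ha : ∀ n, 1 ≤ a n) (n : ℕ) :
    |(conv a (n + 1) : ℝ) - conv a n| = 1 / (denom a (n + 1) * denom a (n + 2)) := by
  have h₁ : (0 : ℝ) < denom a (n + 1) := by exact_mod_cast one_le_denom ha n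
  have h₂ : (0 : ℝ) < denom a (n + 2) := by exact_mod_cast one_le_denom ha (n + 1)
  have hdet : (numer a (n + 2) : ℝ) * denom a (n + 1) - numer a (n + 1) * denom a (n + 2)
      = (-1) ^ (n + 2) := by exact_mod_cast numer_mul_denom_sub a (n + 1)
  have hdiff : (conv a (n + 1) : ℝ) - conv a n
      = (-1) ^ (n + 2) / (denom a (n + 1) * denom a (n + 2)) := by
    rw [cast_conv, cast_conv]; field_simp; linear_combination hdet
  rw [hdiff, abs_div, abs_pow, abs_neg, abs_one, one_pow, abs_of_pos (by positivity)]

theorem cauchySeq_conv (ha : ∀ n, 1 ≤ a n) : CauchySeq fun n => (conv a n : ℝ) := by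
  refine cauchySeq_of_le_geometric (1 / 2) 1 (by norm_num) fun n => ?_
  have h : (2 : ℝ) ^ n ≤ denom a (n + 1) * denom a (n + 2) := by
    exact_mod_cast two_pow_le_denom_mul ha n
  rw [dist_comm, Real.dist_eq, abs_conv_succ_sub_conv ha, one_mul, div_pow, one_pow]
  gcongr

def value (a : ℕ → ℕ) : ℝ := limUnder atTop fun n => (conv a n : ℝ)

theorem tendsto_conv_value (ha : ∀ n, 1 ≤ a n) :
    Tendsto (fun n => (conv a n : ℝ)) atTop (𝓝 (value a)) :=
  (cauchySeq_conv ha).tendsto_limUnder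

theorem one_le_value (ha : ∀ n, 1 ≤ a n) : 1 ≤ value a :=
  ge_of_tendsto (tendsto_conv_value ha) <| .of_forall fun n => by exact_mod_cast one_le_conv ha n

theorem value_le_add_one (ha : ∀ n, 1 ≤ a n) : value a ≤ a 0 + 1 :=
  le_of_tendsto (tendsto_conv_value ha) <| .of_forall fun n => by
    exact_mod_cast conv_le_add_one ha n

theorem value_pos (ha : ∀ n, 1 ≤ a n) : 0 < value a := zero_lt_one.trans_le (one_le_value ha)

theorem value_eq (ha : ∀ n, 1 ≤ a n) : value a = a 0 + (value (shift a))⁻¹ := by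
  have hsh := one_le_shift ha
  refine tendsto_nhds_unique ((tendsto_conv_value ha).comp (tendsto_add_atTop_nat 1)) ?_
  have := ((tendsto_conv_value hsh).inv₀ (value_pos hsh).ne').const_add (a 0 : ℝ)
  convert this using 2 with n
  simp [conv_succ ha]

theorem head_le_value (ha : ∀ n, 1 ≤ a n) : (a 0 : ℝ) ≤ value a := by
  rw [value_eq ha]
  have := (value_pos (one_le_shift ha)).le
  simpa only [le_add_iff_nonneg_right, inv_nonneg]

theorem one_lt_value_shift (ha : ∀ n, 1 ≤ a n) : 1 < value (shift a) := by
  have hsh := one_le_shift ha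
  rw [value_eq hsh]
  have : (1 : ℝ) ≤ shift a 0 := by exact_mod_cast hsh 0
  have := inv_pos.mpr (value_pos (one_le_shift hsh))
  linarith

def tail (a : ℕ → ℕ) (m : ℕ) : ℝ := value (shift^[m] a)

theorem tail_eq (ha : ∀ n, 1 ≤ a n) (m : ℕ) : tail a m = a m + (tail a (m + 1))⁻¹ := by
  rw [tail, value_eq (one_le_shift_iterate ha m), shift_iterate_apply, zero_add, tail,
    shift_iterate_succ]

theorem tail_pos (ha : ∀ n, 1 ≤ a n) (m : ℕ) : 0 < tail a m :=
  value_pos (one_le_shift_iterate ha m)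

theorem one_le_tail (ha : ∀ n, 1 ≤ a n) (m : ℕ) : 1 ≤ tail a m :=
  one_le_value (one_le_shift_iterate ha m)

theorem value_mul_eq (ha : ∀ n, 1 ≤ a n) (m : ℕ) :
    value a * (denom a (m + 1) * tail a (m + 1) + denom a m)
      = numer a (m + 1) * tail a (m + 1) + numer a m := by
  induction m with
  | zero =>
    have ht := (tail_pos ha 1).ne'
    have hx : value a = a 0 + (tail a 1)⁻¹ := tail_eq ha 0
    simp only [numer, denom, Nat.cast_one, Nat.cast_zero, hx]
    field_simp
    ring
  | succ m ih =>
    have ht := (tail_pos ha (m + 2)).ne'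
    rw [tail_eq ha (m + 1)] at ih
    push_cast [numer_add_two, denom_add_two]
    field_simp at ih ⊢
    linear_combination ih

/-- `λ_m = [a_{m+1}; a_{m+2}, …] + [0; a_m, …, a_1]`, so that
`|x - p_m / q_m| = 1 / (λ_m q_m²)`. -/
def approxConst (a : ℕ → ℕ) (m : ℕ) : ℝ := tail a (m + 1) + denom a m / denom a (m + 1)

theorem one_le_approxConst (ha : ∀ n, 1 ≤ a n) (m : ℕ) : 1 ≤ approxConst a m := by
  have := one_le_tail ha (m + 1)
  have : 0 ≤ (denom a m : ℝ) / denom a (m + 1) := by positivity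
  rw [approxConst]; linarith

theorem abs_value_sub_conv (ha : ∀ n, 1 ≤ a n) (m : ℕ) :
    |value a - conv a m| = 1 / ((denom a (m + 1) : ℝ) ^ 2 * approxConst a m) := by
  have hK : (0 : ℝ) < denom a (m + 1) := by exact_mod_cast one_le_denom ha m
  have hD : (0 : ℝ) < denom a (m + 1) * tail a (m + 1) + denom a m := by
    have := tail_pos ha (m + 1); positivity
  have hdet : (numer a (m + 1) : ℝ) * denom a m - numer a m * denom a (m + 1)
      = (-1) ^ (m + 1) := by exact_mod_cast numer_mul_denom_sub a m
  have hx := eq_div_of_mul_eq hD.ne' (value_mul_eq ha m)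
  have hdiff : value a - conv a m
      = (-1) ^ m / (denom a (m + 1) * (denom a (m + 1) * tail a (m + 1) + denom a m)) := by
    rw [hx, cast_conv, div_sub_div _ _ hD.ne' hK.ne']
    congr 1
    · linear_combination -hdet
    · ring
  have hA : (denom a (m + 1) : ℝ) ^ 2 * approxConst a m
      = denom a (m + 1) * (denom a (m + 1) * tail a (m + 1) + denom a m) := by
    rw [approxConst]; field_simp
  rw [hdiff, hA, abs_div, abs_pow, abs_neg, abs_one, one_pow, abs_of_pos (by positivity)]

theorem abs_value_sub_conv_le (ha : ∀ n, 1 ≤ a n) (m : ℕ) :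
    |value a - conv a m| ≤ (tail a (m + 1))⁻¹ := by
  have hK : (1 : ℝ) ≤ (denom a (m + 1) : ℝ) ^ 2 := by
    exact_mod_cast Nat.one_le_pow _ _ (one_le_denom ha m)
  have ht : tail a (m + 1) ≤ approxConst a m := by
    rw [approxConst, le_add_iff_nonneg_right]; positivity
  rw [abs_value_sub_conv ha, one_div]
  exact inv_anti₀ (tail_pos ha _) (by nlinarith [tail_pos ha (m + 1)])

theorem floor_value (ha : ∀ n, 1 ≤ a n) : ⌊value a⌋ = a 0 := by
  have h₁ := inv_lt_one_of_one_lt₀ (one_lt_value_shift ha)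
  have h₂ := inv_pos.mpr (value_pos (one_le_shift ha))
  rw [Int.floor_eq_iff, value_eq ha]
  push_cast
  constructor <;> linarith

theorem fract_value (ha : ∀ n, 1 ≤ a n) : Int.fract (value a) = (value (shift a))⁻¹ := by
  rw [Int.fract, floor_value ha, value_eq ha]
  push_cast
  ring

theorem convergent_value (n : ℕ) : ∀ a : ℕ → ℕ, (∀ m, 1 ≤ a m) →
    (value a).convergent n = conv a n := by
  induction n with
  | zero => intro a ha; simp [floor_value ha, conv_zero]
  | succ n ih =>
    intro a ha
    rw [Real.convergent_succ, floor_value ha, fract_value ha, inv_inv, ih _ (one_le_shift ha),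
      conv_succ ha]
    push_cast
    rfl

theorem den_conv (ha : ∀ n, 1 ≤ a n) (n : ℕ) : (conv a n).den = denom a (n + 1) := by
  have h := Rat.den_div_eq_of_coprime (a := numer a (n + 1)) (b := denom a (n + 1))
    (by exact_mod_cast one_le_denom ha n) (by simpa using coprime_numer_denom a n)
  push_cast at h
  exact_mod_cast h

theorem conv_mem_diophSols_iff (ha : ∀ n, 1 ≤ a n) {c : ℝ} (hc : 0 < c) (m : ℕ) :
    conv a m ∈ diophSols c (value a) ↔ c < approxConst a m := by
  have hK : (0 : ℝ) < denom a (m + 1) := by exact_mod_cast one_le_denom ha m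
  have hA := zero_lt_one.trans_le (one_le_approxConst ha m)
  rw [diophSols, Set.mem_ofPred_eq, abs_value_sub_conv ha, den_conv ha,
    one_div_lt_one_div (by positivity) (by positivity), mul_comm c,
    mul_lt_mul_iff_right₀ (by positivity)]

/-- By Legendre's theorem, good approximations with `c ≥ 2` are convergents. -/
theorem diophSols_subset (ha : ∀ n, 1 ≤ a n) {c : ℝ} (hc : 2 ≤ c) :
    diophSols c (value a) ⊆ conv a '' {m | c < approxConst a m} := by
  intro r hr
  have hden : (0 : ℝ) < r.den := by exact_mod_cast r.pos
  obtain ⟨n, rfl⟩ : ∃ n, r = (value a).convergent n := by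
    refine Real.exists_rat_eq_convergent (hr.trans_le ?_)
    gcongr
  rw [convergent_value n a ha] at hr ⊢
  exact ⟨n, (conv_mem_diophSols_iff ha (by linarith) n).mp hr, rfl⟩

theorem diophSols_infinite (ha : ∀ n, 1 ≤ a n) {c : ℝ} (hc : 0 < c)
    (h : ∃ᶠ m in atTop, c < approxConst a m) : (diophSols c (value a)).Infinite := by
  refine Set.infinite_of_forall_exists_lt_den fun N => ?_
  obtain ⟨m, hm, hcm⟩ := Filter.frequently_atTop.mp h (N + 1)
  refine ⟨conv a m, (conv_mem_diophSols_iff ha hc m).mpr hcm, ?_⟩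
  rw [den_conv ha]
  exact Nat.lt_of_lt_of_le hm (self_le_denom ha m)

theorem diophSols_finite (ha : ∀ n, 1 ≤ a n) {c : ℝ} (hc : 2 ≤ c)
    (h : ∀ᶠ m in atTop, approxConst a m ≤ c) : (diophSols c (value a)).Finite := by
  obtain ⟨M, hM⟩ := Filter.eventually_atTop.mp h
  refine ((Set.finite_Iio M).image (conv a)).subset ((diophSols_subset ha hc).trans ?_)
  exact Set.image_mono fun m hm => not_le.mp fun hMm => (hM m hMm).not_gt hm

/-- `k(x) = limsup λ_m`. -/
theorem kval_value_eq (ha : ∀ n, 1 ≤ a n) {k : ℝ} (hk : 2 ≤ k)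
    (hfreq : ∀ c < k, ∃ᶠ m in atTop, c < approxConst a m)
    (hev : ∀ c, k < c → ∀ᶠ m in atTop, approxConst a m ≤ c) :
    kval (value a) = ENNReal.ofReal k :=
  kval_eq_ofReal (fun c hc hck => diophSols_infinite ha hc (hfreq c hck))
    fun c hkc => diophSols_finite ha (hk.trans hkc.le) (hev c hkc)

theorem one_lt_tail_succ (ha : ∀ n, 1 ≤ a n) (m : ℕ) : 1 < tail a (m + 1) := by
  rw [tail, shift_iterate_succ]
  exact one_lt_value_shift (one_le_shift_iterate ha m)

theorem irrational_value (ha : ∀ n, 1 ≤ a n) : Irrational (value a) := by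
  refine (Real.infinite_rat_abs_sub_lt_one_div_den_sq_iff_irrational _).mp ?_
  have hfreq : ∃ᶠ m in atTop, 1 < approxConst a m := .of_forall fun m => by
    have : (0 : ℝ) ≤ denom a m / denom a (m + 1) := by positivity
    have := one_lt_tail_succ ha m
    rw [approxConst]; linarith
  simpa [diophSols] using diophSols_infinite ha one_pos hfreq

theorem four_thirds_le_goldenRatio : 4 / 3 ≤ φ := by
  nlinarith [Real.goldenRatio_sq, Real.one_lt_goldenRatio]

theorem abs_inv_sub_inv_le {s t : ℝ} (hs : 4 / 3 ≤ s) (ht : 4 / 3 ≤ t) :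
    |s⁻¹ - t⁻¹| ≤ 9 / 16 * |s - t| := by
  have hs₀ : 0 < s := by linarith
  have ht₀ : 0 < t := by linarith
  have hst : 16 / 9 ≤ s * t := by nlinarith
  rw [inv_sub_inv hs₀.ne' ht₀.ne', abs_div, abs_sub_comm, abs_of_pos (mul_pos hs₀ ht₀),
    div_le_iff₀ (by positivity)]
  nlinarith [abs_nonneg (s - t)]

def oneAddInv (t : ℝ) : ℝ := 1 + t⁻¹

theorem mapsTo_oneAddInv : MapsTo oneAddInv (Icc (4 / 3) 3) (Icc (4 / 3) 3) := by
  rintro t ⟨ht₁, ht₂⟩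
  have h₁ : 1 / 3 ≤ t⁻¹ := by rw [le_inv_comm₀ (by norm_num) (by linarith)]; linarith
  have h₂ : t⁻¹ ≤ 3 / 4 := by rw [inv_le_comm₀ (by linarith) (by norm_num)]; linarith
  constructor <;> rw [oneAddInv] <;> linarith

theorem inv_goldenRatio_eq : φ⁻¹ = φ - 1 :=
  inv_eq_of_mul_eq_one_right (by linear_combination Real.goldenRatio_sq)

theorem oneAddInv_goldenRatio : oneAddInv φ = φ := by
  rw [oneAddInv, inv_goldenRatio_eq]
  ring

theorem abs_oneAddInv_iterate_sub_goldenRatio_le {t : ℝ} (ht : t ∈ Icc (4 / 3) 3) (n : ℕ) :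
    |oneAddInv^[n] t - φ| ≤ 2 * (9 / 16) ^ n := by
  induction n with
  | zero =>
    have := Real.goldenRatio_lt_two
    have := Real.one_lt_goldenRatio
    rw [Function.iterate_zero_apply, pow_zero, mul_one, abs_le]
    constructor <;> linarith [ht.1, ht.2]
  | succ n ih =>
    rw [Function.iterate_succ_apply', ← oneAddInv_goldenRatio, oneAddInv, oneAddInv,
      add_sub_add_left_eq_sub, pow_succ]
    calc |(oneAddInv^[n] t)⁻¹ - φ⁻¹| ≤ 9 / 16 * |oneAddInv^[n] t - φ| :=
          abs_inv_sub_inv_le (mapsTo_oneAddInv.iterate n ht).1 four_thirds_le_goldenRatio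
      _ ≤ 2 * ((9 / 16) ^ n * (9 / 16)) := by linarith

/-- Here `2 + φ⁻¹ = φ²`, so `u = v = φ` gives `φ² + φ⁻² = 3`. -/
theorem abs_two_add_inv_add_inv_sub_three_le {u v δ : ℝ} (hu : 4 / 3 ≤ u) (hv : 4 / 3 ≤ v)
    (huδ : |u - φ| ≤ δ) (hvδ : |v - φ| ≤ δ) :
    |2 + u⁻¹ + (2 + v⁻¹)⁻¹ - 3| ≤ δ := by
  have hφ := four_thirds_le_goldenRatio
  have hidentity : 2 + φ⁻¹ + (2 + φ⁻¹)⁻¹ = 3 := by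
    have h : (φ + 1)⁻¹ = 2 - φ :=
      inv_eq_of_mul_eq_one_right (by linear_combination -Real.goldenRatio_sq)
    rw [inv_goldenRatio_eq, show 2 + (φ - 1) = φ + 1 by ring, h]
    ring
  have h2 : ∀ w : ℝ, 4 / 3 ≤ w → 4 / 3 ≤ 2 + w⁻¹ := fun w hw => by
    have := inv_pos.mpr (show 0 < w by linarith); linarith
  have hu' : |u⁻¹ - φ⁻¹| ≤ 9 / 16 * δ := (abs_inv_sub_inv_le hu hφ).trans (by gcongr)
  have hv' : |v⁻¹ - φ⁻¹| ≤ 9 / 16 * δ := (abs_inv_sub_inv_le hv hφ).trans (by gcongr)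
  have hv'' := abs_inv_sub_inv_le (h2 v hv) (h2 φ hφ)
  rw [add_sub_add_left_eq_sub] at hv''
  have hδ : 0 ≤ δ := (abs_nonneg _).trans huδ
  calc |2 + u⁻¹ + (2 + v⁻¹)⁻¹ - 3|
      = |(u⁻¹ - φ⁻¹) + ((2 + v⁻¹)⁻¹ - (2 + φ⁻¹)⁻¹)| := by
        rw [← hidentity]; ring_nf
    _ ≤ |u⁻¹ - φ⁻¹| + |(2 + v⁻¹)⁻¹ - (2 + φ⁻¹)⁻¹| := abs_add_le _ _
    _ ≤ 9 / 16 * δ + 9 / 16 * (9 / 16 * δ) := add_le_add hu' (hv''.trans (by gcongr))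
    _ ≤ δ := by linarith

theorem value_mem_Icc (ha : ∀ n, 1 ≤ a n) (ha₂ : ∀ n, a n ≤ 2) :
    value a ∈ Icc (4 / 3) 3 := by
  have h₁ := one_le_value (one_le_shift ha)
  have h₂ : value (shift a) ≤ 3 := (value_le_add_one (one_le_shift ha)).trans <| by
    have : (shift a 0 : ℝ) ≤ 2 := by exact_mod_cast ha₂ 1
    linarith
  have hlo : 1 / 3 ≤ (value (shift a))⁻¹ := by
    rw [le_inv_comm₀ (by norm_num) (by linarith)]; linarith
  have hhi := inv_le_one_of_one_le₀ h₁
  have : (1 : ℝ) ≤ a 0 := by exact_mod_cast ha 0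
  have : (a 0 : ℝ) ≤ 2 := by exact_mod_cast ha₂ 0
  rw [value_eq ha]
  constructor <;> linarith

theorem value_eq_oneAddInv_iterate (j : ℕ) :
    ∀ a : ℕ → ℕ, (∀ n, 1 ≤ a n) → (∀ k < j, a k = 1) →
      value a = oneAddInv^[j] (value (shift^[j] a)) := by
  induction j with
  | zero => intro a _ _; rfl
  | succ j ih =>
    intro a ha h₁
    rw [value_eq ha, h₁ 0 j.succ_pos,
      ih (shift a) (one_le_shift ha) fun k hk => h₁ (k + 1) (by omega),
      Function.iterate_succ_apply' oneAddInv, Function.iterate_succ_apply]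
    simp [oneAddInv]

def denomRatio (a : ℕ → ℕ) (m : ℕ) : ℝ := (denom a (m + 1) : ℝ) / denom a m

theorem approxConst_eq (a : ℕ → ℕ) (m : ℕ) :
    approxConst a m = tail a (m + 1) + (denomRatio a m)⁻¹ := by
  rw [approxConst, denomRatio, inv_div]

theorem denomRatio_succ (ha : ∀ n, 1 ≤ a n) (m : ℕ) :
    denomRatio a (m + 1) = a (m + 1) + (denomRatio a m)⁻¹ := by
  have hK : (denom a (m + 1) : ℝ) ≠ 0 := by
    exact_mod_cast Nat.one_le_iff_ne_zero.mp (one_le_denom ha m)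
  rw [denomRatio, denomRatio, inv_div, denom_add_two]
  push_cast
  field_simp

theorem inv_denomRatio_le_one (ha : ∀ n, 1 ≤ a n) (m : ℕ) : (denomRatio a m)⁻¹ ≤ 1 := by
  rw [denomRatio, inv_div]
  cases m with
  | zero => simp [denom]
  | succ m =>
    have hK : (0 : ℝ) < denom a (m + 2) := by exact_mod_cast one_le_denom ha (m + 1)
    rw [div_le_one hK]
    exact_mod_cast denom_le_succ ha m

theorem denomRatio_mem_Icc (ha : ∀ n, 1 ≤ a n) {m : ℕ} (h₁ : a (m + 1) ≤ 2)
    (h₂ : a (m + 2) ≤ 2) : denomRatio a (m + 2) ∈ Icc (4 / 3) 3 := by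
  have hρ₁ : 1 ≤ denomRatio a (m + 1) := by
    rw [denomRatio_succ ha]
    have : (1 : ℝ) ≤ a (m + 1) := by exact_mod_cast ha (m + 1)
    have := inv_nonneg.mpr (show (0 : ℝ) ≤ denomRatio a m by unfold denomRatio; positivity)
    linarith
  have hρ₃ : denomRatio a (m + 1) ≤ 3 := by
    rw [denomRatio_succ ha]
    have : (a (m + 1) : ℝ) ≤ 2 := by exact_mod_cast h₁
    linarith [inv_denomRatio_le_one ha m]
  have hlo : 1 / 3 ≤ (denomRatio a (m + 1))⁻¹ := by
    rw [le_inv_comm₀ (by norm_num) (by linarith)]; linarith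
  have : (1 : ℝ) ≤ a (m + 2) := by exact_mod_cast ha (m + 2)
  have : (a (m + 2) : ℝ) ≤ 2 := by exact_mod_cast h₂
  rw [denomRatio_succ ha]
  constructor <;> linarith [inv_denomRatio_le_one ha (m + 1)]

theorem denomRatio_add_eq_oneAddInv_iterate (ha : ∀ n, 1 ≤ a n) (m j : ℕ)
    (h₁ : ∀ k < j, a (m + 1 + k) = 1) :
    denomRatio a (m + j) = oneAddInv^[j] (denomRatio a m) := by
  induction j with
  | zero => rfl
  | succ j ih =>
    rw [← add_assoc, denomRatio_succ ha, ih fun k hk => h₁ k (by omega),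
      Function.iterate_succ_apply', add_right_comm, h₁ j j.lt_succ_self]
    simp [oneAddInv]

/-- `blockSeq i = 1^(i+3) 2 2 1^(i+4) 2 2 1^(i+5) 2 2 …` -/
def blockSeq (i n : ℕ) : ℕ :=
  if n < i + 3 then 1 else if n < i + 5 then 2 else blockSeq (i + 1) (n - (i + 5))
termination_by n

theorem blockSeq_of_lt {i n : ℕ} (h : n < i + 3) : blockSeq i n = 1 := by
  rw [blockSeq, if_pos h]

theorem blockSeq_add_three (i : ℕ) : blockSeq i (i + 3) = 2 := by
  rw [blockSeq, if_neg (by omega), if_pos (by omega)]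

theorem blockSeq_add_four (i : ℕ) : blockSeq i (i + 4) = 2 := by
  rw [blockSeq, if_neg (by omega), if_pos (by omega)]

theorem blockSeq_add (i n : ℕ) : blockSeq i (n + (i + 5)) = blockSeq (i + 1) n := by
  rw [blockSeq, if_neg (by omega), if_neg (by omega), Nat.add_sub_cancel]

theorem blockSeq_mem_Icc (n : ℕ) : ∀ i, blockSeq i n ∈ Icc 1 2 := by
  induction n using Nat.strong_induction_on with
  | _ n ih =>
    intro i
    rw [blockSeq]
    split_ifs
    · simp
    · simp
    · exact ih _ (by omega) (i + 1)

theorem one_le_blockSeq (i n : ℕ) : 1 ≤ blockSeq i n := (blockSeq_mem_Icc n i).1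

theorem blockSeq_le_two (i n : ℕ) : blockSeq i n ≤ 2 := (blockSeq_mem_Icc n i).2

theorem shift_iterate_blockSeq (i : ℕ) : shift^[i + 5] (blockSeq i) = blockSeq (i + 1) := by
  funext n
  rw [shift_iterate_apply, blockSeq_add]

theorem abs_value_blockSeq_sub_goldenRatio_le (i : ℕ) :
    |value (blockSeq i) - φ| ≤ 2 * (9 / 16) ^ (i + 3) := by
  rw [value_eq_oneAddInv_iterate (i + 3) _ (one_le_blockSeq i) fun k hk => blockSeq_of_lt hk]
  refine abs_oneAddInv_iterate_sub_goldenRatio_le (value_mem_Icc ?_ ?_) _ <;> intro n <;>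
    rw [shift_iterate_apply]
  exacts [one_le_blockSeq i _, blockSeq_le_two i _]

theorem tail_blockSeq_add_four (i : ℕ) :
    tail (blockSeq i) (i + 4) = 2 + (value (blockSeq (i + 1)))⁻¹ := by
  rw [tail_eq (one_le_blockSeq i), blockSeq_add_four, tail, shift_iterate_blockSeq]
  norm_num

theorem tail_blockSeq_add_three (i : ℕ) :
    tail (blockSeq i) (i + 3) = 2 + (2 + (value (blockSeq (i + 1)))⁻¹)⁻¹ := by
  rw [tail_eq (one_le_blockSeq i), blockSeq_add_three, tail_blockSeq_add_four]
  norm_num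

/-- Offset of the block `1^(i+3) 2 2` in `blockSeq 0`. -/
def blockStart : ℕ → ℕ
  | 0 => 0
  | i + 1 => blockStart i + (i + 5)

theorem strictMono_blockStart : StrictMono blockStart :=
  strictMono_nat_of_lt_succ fun i => by simp [blockStart]

theorem five_le_blockStart {i : ℕ} (hi : 1 ≤ i) : 5 ≤ blockStart i :=
  strictMono_blockStart.monotone hi

theorem exists_blockStart_le_lt (n : ℕ) :
    ∃ i, blockStart i ≤ n ∧ n < blockStart (i + 1) := by
  induction n with
  | zero => exact ⟨0, le_rfl, by simp [blockStart]⟩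
  | succ n ih =>
    obtain ⟨i, h₁, h₂⟩ := ih
    by_cases h : n + 1 < blockStart (i + 1)
    · exact ⟨i, by omega, h⟩
    · exact ⟨i + 1, by omega, by have := strictMono_blockStart (Nat.lt_add_one (i + 1)); omega⟩

theorem shift_iterate_blockStart_blockSeq (i : ℕ) :
    shift^[blockStart i] (blockSeq 0) = blockSeq i := by
  induction i with
  | zero => rfl
  | succ i ih => rw [blockStart, add_comm, Function.iterate_add_apply, ih, shift_iterate_blockSeq]

theorem shift_iterate_add_blockStart (hL : ∀ n, a (n + L) = blockSeq 0 n) (i : ℕ) :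
    shift^[L + blockStart i] a = blockSeq i := by
  have h : shift^[L] a = blockSeq 0 := funext fun n => by rw [shift_iterate_apply, hL]
  rw [add_comm, Function.iterate_add_apply, h, shift_iterate_blockStart_blockSeq]

theorem apply_add_blockStart (hL : ∀ n, a (n + L) = blockSeq 0 n) (i j : ℕ) :
    a (L + blockStart i + j) = blockSeq i j := by
  rw [← shift_iterate_add_blockStart hL, shift_iterate_apply, add_comm j]

theorem tail_add_blockStart (hL : ∀ n, a (n + L) = blockSeq 0 n) (i j : ℕ) :
    tail a (L + blockStart i + j) = tail (blockSeq i) j := by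
  rw [tail, add_comm _ j, Function.iterate_add_apply, shift_iterate_add_blockStart hL]; rfl

theorem le_two_of_le (hL : ∀ n, a (n + L) = blockSeq 0 n) {n : ℕ} (hn : L ≤ n) :
    a n ≤ 2 := by
  obtain ⟨k, rfl⟩ := Nat.exists_eq_add_of_le' hn
  exact hL k ▸ blockSeq_le_two 0 k

theorem denomRatio_mem_Icc_of_le (ha : ∀ n, 1 ≤ a n) (hL : ∀ n, a (n + L) = blockSeq 0 n)
    {m : ℕ} (hm : L + 2 ≤ m) : denomRatio a m ∈ Icc (4 / 3) 3 := by
  obtain ⟨k, rfl⟩ := Nat.exists_eq_add_of_le' (le_of_add_le_right hm)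
  exact denomRatio_mem_Icc ha (le_two_of_le hL (by omega)) (le_two_of_le hL (by omega))

/-- `L + blockStart i + (i + 2)` is the position of the last `1` of block `i`. -/
theorem denomRatio_end_of_run (ha : ∀ n, 1 ≤ a n) (hL : ∀ n, a (n + L) = blockSeq 0 n)
    {i : ℕ} (hi : 1 ≤ i) : denomRatio a (L + blockStart i + (i + 2)) ∈ Icc (4 / 3) 3 ∧
      |denomRatio a (L + blockStart i + (i + 2)) - φ| ≤ 2 * (9 / 16) ^ (i + 3) := by
  have h5 := five_le_blockStart hi
  have hrun := denomRatio_add_eq_oneAddInv_iterate ha (L + blockStart i - 1) (i + 3) fun k hk => by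
    rw [show L + blockStart i - 1 + 1 + k = L + blockStart i + k by omega,
      apply_add_blockStart hL, blockSeq_of_lt hk]
  rw [show L + blockStart i - 1 + (i + 3) = L + blockStart i + (i + 2) by omega] at hrun
  have hstart := denomRatio_mem_Icc_of_le ha hL (m := L + blockStart i - 1) (by omega)
  rw [hrun]
  exact ⟨mapsTo_oneAddInv.iterate _ hstart, abs_oneAddInv_iterate_sub_goldenRatio_le hstart _⟩

theorem abs_approxConst_sub_three_le (ha : ∀ n, 1 ≤ a n) (hL : ∀ n, a (n + L) = blockSeq 0 n)
    {i : ℕ} (hi : 1 ≤ i) {j : ℕ} (hj : j = i + 2 ∨ j = i + 3) :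
    |approxConst a (L + blockStart i + j) - 3| ≤ 2 * (9 / 16) ^ (i + 3) := by
  have hA : |value (blockSeq (i + 1)) - φ| ≤ 2 * (9 / 16) ^ (i + 3) :=
    (abs_value_blockSeq_sub_goldenRatio_le (i + 1)).trans <|
      mul_le_mul_of_nonneg_left (pow_le_pow_of_le_one (by norm_num) (by norm_num) (by omega))
        (by norm_num)
  have hA' := (value_mem_Icc (one_le_blockSeq (i + 1)) (blockSeq_le_two (i + 1))).1
  obtain ⟨⟨hR', -⟩, hR⟩ := denomRatio_end_of_run ha hL hi
  rcases hj with rfl | rfl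
  · rw [approxConst_eq, add_assoc, tail_add_blockStart hL, tail_blockSeq_add_three]
    convert abs_two_add_inv_add_inv_sub_three_le hR' hA' hR hA using 2
    ring
  · have hρ : denomRatio a (L + blockStart i + (i + 3))
        = 2 + (denomRatio a (L + blockStart i + (i + 2)))⁻¹ := by
      rw [show L + blockStart i + (i + 3) = L + blockStart i + (i + 2) + 1 by omega,
        denomRatio_succ ha,
        show L + blockStart i + (i + 2) + 1 = L + blockStart i + (i + 3) by omega,
        apply_add_blockStart hL, blockSeq_add_three]
      norm_num
    rw [approxConst_eq, hρ, add_assoc, tail_add_blockStart hL, tail_blockSeq_add_four]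
    exact abs_two_add_inv_add_inv_sub_three_le hA' hR' hA hR

theorem approxConst_le_of_next_eq_one (ha : ∀ n, 1 ≤ a n) (hL : ∀ n, a (n + L) = blockSeq 0 n)
    {m : ℕ} (hm : L + 2 ≤ m) (h₁ : a (m + 1) = 1) : approxConst a m ≤ 5 / 2 := by
  have htail : 4 / 3 ≤ tail a (m + 2) := by
    refine (value_mem_Icc (one_le_shift_iterate ha _) fun n => ?_).1
    rw [shift_iterate_apply]
    exact le_two_of_le hL (by omega)
  have hρ := (denomRatio_mem_Icc_of_le ha hL hm).1
  have h₁' : (tail a (m + 2))⁻¹ ≤ 3 / 4 := by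
    rw [inv_le_comm₀ (by linarith) (by norm_num)]; linarith
  have h₂' : (denomRatio a m)⁻¹ ≤ 3 / 4 := by
    rw [inv_le_comm₀ (by linarith) (by norm_num)]; linarith
  rw [approxConst_eq, tail_eq ha, h₁]
  push_cast
  linarith

theorem frequently_lt_approxConst (ha : ∀ n, 1 ≤ a n) (hL : ∀ n, a (n + L) = blockSeq 0 n)
    {c : ℝ} (hc : c < 3) : ∃ᶠ m in atTop, c < approxConst a m := by
  obtain ⟨I, hI⟩ := exists_pow_lt_of_lt_one (show 0 < (3 - c) / 2 by linarith)
    (show (9 / 16 : ℝ) < 1 by norm_num)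
  refine Filter.frequently_atTop.mpr fun N =>
    ⟨L + blockStart (N + I + 1) + (N + I + 1 + 3), by omega, ?_⟩
  have h := abs_approxConst_sub_three_le ha hL (i := N + I + 1) (by omega) (Or.inr rfl)
  have : (9 / 16 : ℝ) ^ (N + I + 1 + 3) ≤ (9 / 16) ^ I :=
    pow_le_pow_of_le_one (by norm_num) (by norm_num) (by omega)
  rw [abs_le] at h
  linarith

theorem eventually_approxConst_le (ha : ∀ n, 1 ≤ a n) (hL : ∀ n, a (n + L) = blockSeq 0 n)
    {c : ℝ} (hc : 3 < c) : ∀ᶠ m in atTop, approxConst a m ≤ c := by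
  obtain ⟨I, hI⟩ := exists_pow_lt_of_lt_one (show 0 < (c - 3) / 2 by linarith)
    (show (9 / 16 : ℝ) < 1 by norm_num)
  refine Filter.eventually_atTop.mpr ⟨L + blockStart (I + 1), fun m hm => ?_⟩
  obtain ⟨i, hi₁, hi₂⟩ := exists_blockStart_le_lt (m + 1 - L)
  have hIi : I + 1 < i + 1 := strictMono_blockStart.lt_iff_lt.mp (by omega)
  have h5 := five_le_blockStart (Nat.le_add_left 1 I)
  have hnext : blockStart (i + 1) = blockStart i + (i + 5) := rfl
  -- `m + 1` lies in block `i`: either `a (m + 1) = 1` or `m` precedes one of its two `2`s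
  rcases lt_or_ge (m + 1 - L - blockStart i) (i + 3) with hj | hj
  · have h₁ : a (m + 1) = 1 := by
      rw [show m + 1 = L + blockStart i + (m + 1 - L - blockStart i) by omega,
        apply_add_blockStart hL, blockSeq_of_lt hj]
    linarith [approxConst_le_of_next_eq_one ha hL (by omega) h₁]
  · obtain ⟨j, hj', rfl⟩ : ∃ j, (j = i + 2 ∨ j = i + 3) ∧ m = L + blockStart i + j :=
      ⟨m - L - blockStart i, by omega, by omega⟩
    have h := abs_approxConst_sub_three_le ha hL (by omega) hj'
    have : (9 / 16 : ℝ) ^ (i + 3) ≤ (9 / 16) ^ I :=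
      pow_le_pow_of_le_one (by norm_num) (by norm_num) (by omega)
    rw [abs_le] at h
    linarith

theorem value_mem_kinv3 (ha : ∀ n, 1 ≤ a n) (hL : ∀ n, a (n + L) = blockSeq 0 n) :
    value a ∈ kinv3 := by
  refine ⟨irrational_value ha, ?_⟩
  rw [kval_value_eq ha (k := 3) (by norm_num) (fun c hc => frequently_lt_approxConst ha hL hc)
    fun c hc => eventually_approxConst_le ha hL hc]
  exact ENNReal.ofReal_ofNat 3

def prepend (l : List ℕ) (b : ℕ → ℕ) (n : ℕ) : ℕ := l.getD n (b (n - l.length))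

theorem one_le_prepend {l : List ℕ} {b : ℕ → ℕ} (hl : ∀ c ∈ l, 1 ≤ c)
    (hb : ∀ n, 1 ≤ b n) : ∀ n, 1 ≤ prepend l b n := by
  intro n
  rcases lt_or_ge n l.length with h | h
  · rw [prepend, List.getD_eq_getElem l _ h]
    exact hl _ (List.getElem_mem h)
  · rw [prepend, List.getD_eq_default l _ h]
    exact hb _

theorem prepend_add_length (l : List ℕ) (b : ℕ → ℕ) (n : ℕ) :
    prepend l b (n + l.length) = b n := by
  rw [prepend, List.getD_eq_default l _ (Nat.le_add_left _ _), Nat.add_sub_cancel]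

theorem shift_prepend_cons (c : ℕ) (l : List ℕ) (b : ℕ → ℕ) :
    shift (prepend (c :: l) b) = prepend l b := by
  funext n
  simp [shift, prepend]

theorem tail_length_prepend (l : List ℕ) (b : ℕ → ℕ) :
    tail (prepend l b) l.length = value b := by
  rw [tail]
  congr 1
  funext n
  rw [shift_iterate_apply, prepend_add_length]

theorem exists_conv_prepend_eq (B : ℕ) :
    ∀ A, 1 ≤ B → B < A → A.Coprime B → ∃ c l, (∀ x ∈ c :: l, 1 ≤ x) ∧
      ∀ b : ℕ → ℕ, (∀ n, 1 ≤ b n) →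
        conv (prepend (c :: l) b) l.length = (A / B : ℚ) := by
  induction B using Nat.strong_induction_on with
  | _ B ih =>
    intro A hB hBA hco
    obtain rfl | hB₂ := hB.eq_or_lt
    · exact ⟨A, [], by simp; omega, fun b _ => by simp [conv_zero, prepend]⟩
    have hr : A % B ≠ 0 := fun h => by
      have := Nat.Coprime.eq_one_of_dvd hco.symm (Nat.dvd_of_mod_eq_zero h); omega
    have hq : 1 ≤ A / B := (Nat.one_le_div_iff (by omega)).mpr hBA.le
    obtain ⟨c, l, hl, hconv⟩ := ih (A % B) (Nat.mod_lt A (by omega)) B (by omega)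
      (Nat.mod_lt A (by omega))
      (by rw [Nat.Coprime, Nat.gcd_comm, ← Nat.gcd_rec, Nat.gcd_comm]; exact hco)
    have hl' : ∀ x ∈ A / B :: c :: l, 1 ≤ x := fun x hx => by
      rcases List.mem_cons.mp hx with rfl | hx
      exacts [hq, hl x hx]
    refine ⟨A / B, c :: l, hl', fun b hb => ?_⟩
    have hB₀ : (B : ℚ) ≠ 0 := by positivity
    have hr₀ : ((A % B : ℕ) : ℚ) ≠ 0 := by exact_mod_cast hr
    have hA : (A : ℚ) = (A / B : ℕ) * B + (A % B : ℕ) := by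
      exact_mod_cast (Nat.div_add_mod' A B).symm
    rw [List.length_cons, conv_succ (one_le_prepend hl' hb), shift_prepend_cons,
      hconv b hb, inv_div, hA]
    simp only [prepend, List.getD_cons_zero]
    field_simp

theorem exists_conv_prepend_eq_rat {r : ℚ} (hr : 1 < r) : ∃ c l, (∀ x ∈ c :: l, 1 ≤ x) ∧
    ∀ b : ℕ → ℕ, (∀ n, 1 ≤ b n) → conv (prepend (c :: l) b) l.length = r := by
  have hnum : ((r.num.natAbs : ℤ) : ℚ) = r.num := by
    rw [Int.natAbs_of_nonneg (Rat.num_nonneg.mpr (by linarith))]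
  have hr' : r = (r.num.natAbs : ℚ) / r.den := by
    rw [← Int.cast_natCast, hnum, Rat.num_div_den]
  have hlt : r.den < r.num.natAbs := by
    have hden : (0 : ℚ) < r.den := by exact_mod_cast r.pos
    rw [hr', one_lt_div hden] at hr
    exact_mod_cast hr
  obtain ⟨c, l, hl, hconv⟩ := exists_conv_prepend_eq r.den r.num.natAbs r.pos hlt r.reduced
  exact ⟨c, l, hl, fun b hb => (hconv b hb).trans hr'.symm⟩

end ContinuedFraction

open ContinuedFraction in
theorem exists_mem_kinv3_between {u v : ℝ} (hu : 1 ≤ u) (huv : u < v) :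
    ∃ y ∈ kinv3, u < y ∧ y < v := by
  obtain ⟨r, hur, hrv⟩ := exists_rat_btwn huv
  obtain ⟨c, l, hl, hconv⟩ :=
    exists_conv_prepend_eq_rat (r := r) (by exact_mod_cast hu.trans_lt hur)
  obtain ⟨N, hN⟩ := exists_nat_gt (max (r - u)⁻¹ (v - r)⁻¹)
  have hN₁ : 1 ≤ N := by
    have := (le_max_left _ _).trans_lt hN
    exact_mod_cast (inv_pos.mpr (sub_pos.mpr hur)).trans this
  -- a large partial quotient `N` right after the expansion of `r` pins the value near `r`
  obtain ⟨b, hb, hb₀, hbL⟩ :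
      ∃ b : ℕ → ℕ, (∀ n, 1 ≤ b n) ∧ b 0 = N ∧ ∀ n, b (n + 1) = blockSeq 0 n :=
    ⟨prepend [N] (blockSeq 0), one_le_prepend (by simpa using hN₁) (one_le_blockSeq 0), rfl,
      prepend_add_length [N] _⟩
  have ha : ∀ n, 1 ≤ prepend (c :: l) b n := one_le_prepend hl hb
  have hL : ∀ n, prepend (c :: l) b (n + (l.length + 2)) = blockSeq 0 n := fun n => by
    rw [show n + (l.length + 2) = n + 1 + (c :: l).length by simp; ring, prepend_add_length, hbL]
  have htail : (N : ℝ) ≤ tail (prepend (c :: l) b) (l.length + 1) := by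
    have h := tail_length_prepend (c :: l) b
    rw [List.length_cons] at h
    rw [h, ← hb₀]
    exact head_le_value hb
  have hclose : |value (prepend (c :: l) b) - r| ≤ (N : ℝ)⁻¹ := by
    have h := abs_value_sub_conv_le ha l.length
    rw [hconv b hb] at h
    exact h.trans (inv_anti₀ (by positivity) htail)
  have h₁ : (N : ℝ)⁻¹ < r - u :=
    inv_lt_of_inv_lt₀ (sub_pos.mpr hur) ((le_max_left _ _).trans_lt hN)
  have h₂ : (N : ℝ)⁻¹ < v - r :=
    inv_lt_of_inv_lt₀ (sub_pos.mpr hrv) ((le_max_right _ _).trans_lt hN)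
  rw [abs_le] at hclose
  exact ⟨_, value_mem_kinv3 ha hL, by linarith, by linarith⟩

theorem dense_kinv3 : Dense kinv3 := by
  refine dense_iff_exists_between.mpr fun u v huv => ?_
  set z := ⌈1 - u⌉
  obtain ⟨y, ⟨hy, hky⟩, huy, hyv⟩ :=
    exists_mem_kinv3_between (u := u + z) (v := v + z) (by linarith [Int.le_ceil (1 - u)])
      (by linarith)
  refine ⟨y + ((-z : ℤ) : ℝ), ⟨hy.add_intCast _, by rw [kval_add_intCast, hky]⟩, ?_, ?_⟩
  all_goals push_cast; linarith

/-- The set `k⁻¹(3)` is not a `G_δ` subset of `ℝ`. -/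
theorem stmt_4 : ¬ IsGδ kinv3 := by
  intro hGδ
  have hres : ∀ᶠ x in residual ℝ, x ∈ kinv3 := residual_of_dense_Gδ hGδ dense_kinv3
  obtain ⟨x, hx, hxL⟩ :=
    (dense_of_mem_residual (hres.and eventually_residual_liouville)).nonempty
  exact hxL.three_lt_kval.ne' hx.2
end
end

section
/- The set k⁻¹(3) is an F_{σδ} subset of ℝ: it can be written as a countable intersection of countable unions of closed sets, where moreover each of these closed sets has empty interior. -/
open Filter Set MeasureTheory Topology
open scoped ENNReal NNReal

noncomputable section

namespace Stmt6Aux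

/-- The open set of reals admitting an approximation with denominator at least `N`. -/
def Aset (c : ℝ) (N : ℕ) : Set ℝ :=
  ⋃ (r : ℚ) (_ : N ≤ r.den), Metric.ball (r : ℝ) (1 / (c * (r.den : ℝ) ^ 2))

lemma isOpen_Aset (c : ℝ) (N : ℕ) : IsOpen (Aset c N) :=
  isOpen_iUnion fun _ => isOpen_iUnion fun _ => Metric.isOpen_ball

lemma mem_Aset {c : ℝ} {N : ℕ} {x : ℝ} :
    x ∈ Aset c N ↔ ∃ r : ℚ, N ≤ r.den ∧ r ∈ diophSols c x := by
  simp [Aset, diophSols, Metric.mem_ball, Real.dist_eq]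

lemma diophSols_mono {c c' : ℝ} (hc : 0 < c) (h : c ≤ c') (x : ℝ) :
    diophSols c' x ⊆ diophSols c x := by
  intro r hr
  simp only [diophSols, Set.mem_setOf_eq] at hr ⊢
  have h0 : (0:ℝ) < (r.den : ℝ) := by exact_mod_cast r.pos
  refine lt_of_lt_of_le hr ?_
  have hle : c * (r.den : ℝ)^2 ≤ c' * (r.den : ℝ)^2 := by nlinarith
  exact one_div_le_one_div_of_le (show (0:ℝ) < c * (r.den:ℝ)^2 by positivity) hle

lemma finite_den_le (x B : ℝ) (N : ℕ) :
    {r : ℚ | r.den ≤ N ∧ |x - (r:ℝ)| ≤ B}.Finite := by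
  set M : ℤ := ⌈(|x| + |B|) * N⌉ with hM
  apply Set.Finite.of_finite_image (f := fun r : ℚ => (r.num, r.den))
  · apply Set.Finite.subset ((Set.finite_Icc (-M) M).prod (Set.finite_Iic N))
    rintro ⟨a, b⟩ ⟨r, ⟨hden, hB⟩, hr⟩
    obtain ⟨rfl, rfl⟩ : r.num = a ∧ r.den = b := by
      simpa using hr
    have h0 : (0:ℝ) < (r.den : ℝ) := by exact_mod_cast r.pos
    have hr1 : |(r:ℝ)| ≤ |x| + |B| := by
      have : |(r:ℝ)| - |x| ≤ |x - r| := by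
        have := abs_sub_abs_le_abs_sub (r:ℝ) x
        rw [abs_sub_comm] at this
        linarith
      have hBB : B ≤ |B| := le_abs_self B
      linarith
    have hnum : |(r.num : ℝ)| ≤ (|x| + |B|) * N := by
      have hcast : (r.num : ℝ) = (r:ℝ) * (r.den : ℝ) := by
        rw [Rat.cast_def]; field_simp
      rw [hcast, abs_mul, abs_of_pos h0]
      have hdenN : (r.den : ℝ) ≤ N := by exact_mod_cast hden
      have hxB : (0:ℝ) ≤ |x| + |B| := by positivity
      exact mul_le_mul hr1 hdenN h0.le hxB
    have hnum' : |r.num| ≤ M := by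
      have h1 : ((|r.num| : ℤ) : ℝ) ≤ ((M : ℤ) : ℝ) := by
        rw [Int.cast_abs, hM]
        exact hnum.trans (Int.le_ceil _)
      exact_mod_cast h1
    exact ⟨by simpa [abs_le] using hnum', hden⟩
  · intro r1 h1 r2 h2 h
    simp only [Prod.mk.injEq] at h
    exact Rat.ext h.1 h.2

lemma infinite_iff {c : ℝ} (hc : 0 < c) (x : ℝ) :
    (diophSols c x).Infinite ↔ ∀ N : ℕ, x ∈ Aset c N := by
  constructor
  · intro h N
    rw [mem_Aset]
    by_contra hno
    push_neg at hno
    apply h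
    apply (finite_den_le x (1/c) N).subset
    intro r hr
    have hd1 : (1:ℝ) ≤ (r.den : ℝ) := by exact_mod_cast r.pos
    constructor
    · by_contra hN
      exact absurd hr (by simpa using hno r (by omega))
    · have : |x - (r:ℝ)| < 1 / (c * (r.den:ℝ)^2) := hr
      have hle : 1 / (c * (r.den:ℝ)^2) ≤ 1/c := by
        have hsq : (1:ℝ) ≤ (r.den:ℝ)^2 := by nlinarith
        apply one_div_le_one_div_of_le hc
        nlinarith [mul_le_mul_of_nonneg_left hsq hc.le]
      linarith
  · intro h
    by_contra hf
    rw [Set.not_infinite] at hf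
    obtain ⟨b, hb⟩ := (hf.image Rat.den).bddAbove
    obtain ⟨r, hrden, hr⟩ := mem_Aset.mp (h (b+1))
    have : r.den ≤ b := hb (Set.mem_image_of_mem _ hr)
    omega

lemma exists_rat_den_ge (N : ℕ) {a b : ℝ} (hab : a < b) :
    ∃ q : ℚ, N ≤ q.den ∧ a < (q:ℝ) ∧ (q:ℝ) < b := by
  obtain ⟨n, hn⟩ := exists_nat_gt (2 / (b - a))
  obtain ⟨p, hpn, hp⟩ := Nat.exists_infinite_primes (max N (n+1))
  have hpN : N ≤ p := le_trans (le_max_left _ _) hpn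
  have hppos : (0:ℝ) < p := by exact_mod_cast hp.pos
  have hp2 : 2 / (b - a) < p := by
    have : (n:ℝ) < p := by exact_mod_cast lt_of_lt_of_le (Nat.lt_succ_self n) (le_trans (le_max_right _ _) hpn)
    linarith
  have hba : 0 < b - a := by linarith
  have h2lt : 2 < (b - a) * p := by
    rw [div_lt_iff₀ hba] at hp2; linarith
  set k : ℤ := ⌊a * p⌋ + 1 with hk
  have hkR : (k:ℝ) = ((⌊a * (p:ℝ)⌋ : ℤ) : ℝ) + 1 := by rw [hk]; push_cast; ring
  have hak : a * p < (k:ℝ) := by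
    rw [hkR]; exact Int.lt_floor_add_one (a * (p:ℝ))
  have hkb : ((k:ℝ) + 1) < b * p := by
    have hfl := Int.floor_le (a * (p:ℝ))
    rw [hkR]; nlinarith
  -- choose k' among k, k+1 not divisible by p
  obtain ⟨k', hnd, hak', hk'b⟩ :
      ∃ k' : ℤ, ¬ (p:ℤ) ∣ k' ∧ a * p < (k':ℝ) ∧ (k':ℝ) < b * p := by
    by_cases hdvd : (p:ℤ) ∣ k
    · refine ⟨k + 1, ?_, by push_cast; linarith, by push_cast; linarith⟩
      intro hdvd'
      have h1 : (p:ℤ) ∣ 1 := by simpa using dvd_sub hdvd' hdvd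
      have h2 := Int.le_of_dvd one_pos h1
      have hp2' : (2:ℤ) ≤ p := by exact_mod_cast hp.two_le
      omega
    · exact ⟨k, hdvd, hak, by linarith⟩
  have hcop : k'.natAbs.Coprime p :=
    ((Nat.Prime.coprime_iff_not_dvd hp).mpr
      (fun hd => hnd (Int.dvd_natAbs.mp (Int.natCast_dvd_natCast.mpr hd)))).symm
  refine ⟨Rat.mk' k' p hp.pos.ne' hcop, hpN, ?_, ?_⟩
  · rw [Rat.cast_def]
    show a < (k':ℝ) / ((p:ℕ):ℝ)
    rw [lt_div_iff₀ hppos]; linarith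
  · rw [Rat.cast_def]
    show (k':ℝ) / ((p:ℕ):ℝ) < b
    rw [div_lt_iff₀ hppos]; linarith

lemma dense_Aset {c : ℝ} (hc : 0 < c) (N : ℕ) : Dense (Aset c N) := by
  intro x
  rw [Metric.mem_closure_iff]
  intro ε hε
  obtain ⟨q, hq, h1, h2⟩ := exists_rat_den_ge N (show x - ε < x + ε by linarith)
  refine ⟨q, ?_, ?_⟩
  · rw [mem_Aset]
    refine ⟨q, hq, ?_⟩
    show |(q:ℝ) - (q:ℝ)| < _
    have h0 : (0:ℝ) < (q.den : ℝ) := by exact_mod_cast q.pos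
    simp only [sub_self, abs_zero]
    positivity
  · rw [Real.dist_eq, abs_sub_lt_iff]; constructor <;> linarith

lemma interior_compl_Aset {c : ℝ} (hc : 0 < c) (N : ℕ) :
    interior (Aset c N)ᶜ = ∅ := by
  rw [interior_compl, (dense_Aset hc N).closure_eq, compl_univ]

/-- Closed pieces exhausting an open set. -/
def oPiece (U : Set ℝ) (n : ℕ) : Set ℝ := {x | ∀ y ∉ U, 1/(n+1:ℝ) ≤ dist x y}

lemma isClosed_oPiece (U : Set ℝ) (n : ℕ) : IsClosed (oPiece U n) := by
  have : oPiece U n = ⋂ (y : ℝ) (_ : y ∉ U), {x | 1/(n+1:ℝ) ≤ dist x y} := by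
    ext z; simp [oPiece]
  rw [this]
  exact isClosed_iInter fun y => isClosed_iInter fun _ =>
    isClosed_le continuous_const (continuous_id.dist continuous_const)

lemma oPiece_subset (U : Set ℝ) (n : ℕ) : oPiece U n ⊆ U := by
  intro x hx
  by_contra hxU
  have h1 := hx x hxU
  rw [dist_self] at h1
  have h2 : (0:ℝ) < 1/(n+1:ℝ) := by positivity
  linarith

lemma exists_oPiece {U : Set ℝ} (hU : IsOpen U) {x : ℝ} (hx : x ∈ U) :
    ∃ n, x ∈ oPiece U n := by
  obtain ⟨ε, hε, hball⟩ := Metric.isOpen_iff.mp hU x hx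
  obtain ⟨n, hn⟩ := exists_nat_one_div_lt hε
  refine ⟨n, fun y hy => ?_⟩
  by_contra hlt
  push_neg at hlt
  exact hy (hball (by rw [Metric.mem_ball, dist_comm]; exact hlt.trans hn))

def cminus (m : ℕ) : ℝ := 3 - 1/(m+1)
def cplus (m : ℕ) : ℝ := 3 + 1/(m+1)

lemma one_div_le (m : ℕ) : 1/((m:ℝ)+1) ≤ 1 := by
  rw [div_le_one (by positivity)]
  linarith [Nat.cast_nonneg (α := ℝ) m]

lemma one_div_pos' (m : ℕ) : (0:ℝ) < 1/((m:ℝ)+1) := by positivity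

lemma cminus_pos (m : ℕ) : 0 < cminus m := by
  have := one_div_le m; unfold cminus; linarith

lemma cminus_lt (m : ℕ) : cminus m < 3 := by
  have := one_div_pos' m; unfold cminus; linarith

lemma cplus_pos (m : ℕ) : 0 < cplus m := by
  have := one_div_pos' m; unfold cplus; linarith

lemma three_lt_cplus (m : ℕ) : 3 < cplus m := by
  have := one_div_pos' m; unfold cplus; linarith

lemma kge3_iff (x : ℝ) : 3 ≤ kval x ↔ ∀ m : ℕ, (diophSols (cminus m) x).Infinite := by
  constructor
  · intro h m
    have h3 : ENNReal.ofReal (cminus m) < kval x := by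
      refine lt_of_lt_of_le ?_ h
      rw [show (3:ℝ≥0∞) = ENNReal.ofReal 3 by norm_num]
      exact (ENNReal.ofReal_lt_ofReal_iff (by norm_num)).mpr (cminus_lt m)
    obtain ⟨s, hs, hlt⟩ := lt_sSup_iff.mp h3
    obtain ⟨c', ⟨hc'pos, hinf⟩, rfl⟩ := hs
    have hcc : cminus m < c' := (ENNReal.ofReal_lt_ofReal_iff hc'pos).mp hlt
    exact hinf.mono (diophSols_mono (cminus_pos m) hcc.le x)
  · intro h
    by_contra hlt
    push_neg at hlt
    have hne : kval x ≠ ⊤ := ne_top_of_lt hlt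
    have htr : (kval x).toReal < 3 := by
      have := (ENNReal.toReal_lt_toReal hne (by norm_num)).mpr hlt
      simpa using this
    obtain ⟨m, hm⟩ := exists_nat_one_div_lt (show 0 < 3 - (kval x).toReal by linarith)
    have hmem : ENNReal.ofReal (cminus m) ≤ kval x :=
      le_sSup ⟨cminus m, ⟨cminus_pos m, h m⟩, rfl⟩
    have hcon : kval x < ENNReal.ofReal (cminus m) := by
      conv_lhs => rw [← ENNReal.ofReal_toReal hne]
      exact (ENNReal.ofReal_lt_ofReal_iff (cminus_pos m)).mpr (by unfold cminus; linarith)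
    exact absurd hmem hcon.not_ge

lemma kle3_iff (x : ℝ) : kval x ≤ 3 ↔ ∀ m : ℕ, ¬ (diophSols (cplus m) x).Infinite := by
  constructor
  · intro h m hinf
    have hmem : ENNReal.ofReal (cplus m) ≤ kval x :=
      le_sSup ⟨cplus m, ⟨cplus_pos m, hinf⟩, rfl⟩
    have h3 : (3:ℝ≥0∞) < ENNReal.ofReal (cplus m) := by
      rw [show (3:ℝ≥0∞) = ENNReal.ofReal 3 by norm_num]
      exact (ENNReal.ofReal_lt_ofReal_iff (cplus_pos m)).mpr (three_lt_cplus m)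
    exact absurd (hmem.trans h) h3.not_ge
  · intro h
    apply sSup_le
    rintro s ⟨c, ⟨hcpos, hinf⟩, rfl⟩
    rw [show (3:ℝ≥0∞) = ENNReal.ofReal 3 by norm_num]
    apply ENNReal.ofReal_le_ofReal
    by_contra hc3
    push_neg at hc3
    obtain ⟨m, hm⟩ := exists_nat_one_div_lt (show (0:ℝ) < c - 3 by linarith)
    exact h m (hinf.mono (diophSols_mono (cplus_pos m) (by unfold cplus; linarith) x))

def opensOf : ℚ ⊕ ℕ × ℕ → Set ℝ
  | Sum.inl q => {(q:ℝ)}ᶜ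
  | Sum.inr (m, N) => Aset (cminus m) N

def opensIdx (j : ℕ) : Set ℝ := opensOf (Denumerable.ofNat (ℚ ⊕ ℕ × ℕ) j)

lemma isOpen_opensIdx (j : ℕ) : IsOpen (opensIdx j) := by
  rw [opensIdx]
  rcases Denumerable.ofNat (ℚ ⊕ ℕ × ℕ) j with q | ⟨m, N⟩
  · exact isOpen_compl_singleton
  · exact isOpen_Aset _ _

lemma mem_iInter_opensIdx {x : ℝ} :
    (∀ j, x ∈ opensIdx j) ↔ Irrational x ∧ ∀ m N, x ∈ Aset (cminus m) N := by
  constructor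
  · intro h
    constructor
    · rintro ⟨q, rfl⟩
      obtain ⟨j, hj⟩ : ∃ j, Denumerable.ofNat (ℚ ⊕ ℕ × ℕ) j = Sum.inl q :=
        ⟨_, Denumerable.ofNat_encode _⟩
      have := h j
      rw [opensIdx, hj] at this
      exact this rfl
    · intro m N
      obtain ⟨j, hj⟩ : ∃ j, Denumerable.ofNat (ℚ ⊕ ℕ × ℕ) j = Sum.inr (m, N) :=
        ⟨_, Denumerable.ofNat_encode _⟩
      have := h j
      rw [opensIdx, hj] at this
      exact this
  · rintro ⟨hirr, hA⟩ j
    rw [opensIdx]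
    rcases Denumerable.ofNat (ℚ ⊕ ℕ × ℕ) j with q | ⟨m, N⟩
    · exact fun hx => hirr ⟨q, hx.symm⟩
    · exact hA m N

lemma mem_kinv3_iff {x : ℝ} :
    x ∈ kinv3 ↔ (∀ j, x ∈ opensIdx j) ∧ ∀ m : ℕ, ∃ N : ℕ, x ∉ Aset (cplus m) N := by
  rw [kinv3, Set.mem_setOf_eq, mem_iInter_opensIdx]
  constructor
  · rintro ⟨hirr, hk⟩
    refine ⟨⟨hirr, fun m N => ?_⟩, fun m => ?_⟩
    · exact (infinite_iff (cminus_pos m) x).mp ((kge3_iff x).mp hk.ge m) N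
    · have hle := (kle3_iff x).mp hk.le m
      rw [infinite_iff (cplus_pos m) x] at hle
      push_neg at hle; exact hle
  · rintro ⟨⟨hirr, hA⟩, hC⟩
    refine ⟨hirr, le_antisymm ?_ ?_⟩
    · rw [kle3_iff]
      intro m
      rw [infinite_iff (cplus_pos m) x]
      push_neg
      exact hC m
    · rw [kge3_iff]
      intro m
      exact (infinite_iff (cminus_pos m) x).mpr (hA m)

def Fset (M n : ℕ) : Set ℝ :=
  oPiece (opensIdx M.unpair.1) n.unpair.1 ∩ (Aset (cplus M.unpair.2) n.unpair.2)ᶜ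

end Stmt6Aux

/-- The set `k⁻¹(3)` is an `F_{σδ}` subset of `ℝ`: a countable intersection of countable
unions of closed sets, each of which has empty interior. -/
theorem stmt_6 :
    ∃ F : ℕ → ℕ → Set ℝ, (∀ m n, IsClosed (F m n)) ∧ (∀ m n, interior (F m n) = ∅) ∧
      kinv3 = ⋂ m, ⋃ n, F m n := by
  refine ⟨Stmt6Aux.Fset, fun M n => ?_, fun M n => ?_, ?_⟩
  · exact (Stmt6Aux.isClosed_oPiece _ _).inter
      (Stmt6Aux.isOpen_Aset _ _).isClosed_compl
  · have hsub : interior (Stmt6Aux.Fset M n) ⊆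
        interior (Stmt6Aux.Aset (Stmt6Aux.cplus M.unpair.2) n.unpair.2)ᶜ :=
      interior_mono Set.inter_subset_right
    rw [Stmt6Aux.interior_compl_Aset (Stmt6Aux.cplus_pos _) _] at hsub
    exact Set.subset_empty_iff.mp hsub
  · ext x
    simp only [Set.mem_iInter, Set.mem_iUnion]
    rw [Stmt6Aux.mem_kinv3_iff]
    constructor
    · rintro ⟨h1, h2⟩ M
      obtain ⟨N1, hN1⟩ := Stmt6Aux.exists_oPiece
        (Stmt6Aux.isOpen_opensIdx M.unpair.1) (h1 M.unpair.1)
      obtain ⟨N2, hN2⟩ := h2 M.unpair.2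
      exact ⟨Nat.pair N1 N2, by
        simp only [Stmt6Aux.Fset, Nat.unpair_pair]; exact ⟨hN1, hN2⟩⟩
    · intro h
      constructor
      · intro j
        obtain ⟨n, hn⟩ := h (Nat.pair j 0)
        simp only [Stmt6Aux.Fset, Nat.unpair_pair] at hn
        exact Stmt6Aux.oPiece_subset _ _ hn.1
      · intro m
        obtain ⟨n, hn⟩ := h (Nat.pair 0 m)
        simp only [Stmt6Aux.Fset, Nat.unpair_pair] at hn
        exact ⟨n.unpair.2, hn.2⟩
end
end

section
/- Let t be a real number in the image of k (the Lagrange spectrum) and let ε > 0. Given any irrational x = [0; a_1, a_2, …] ∈ (0,1) with k(x) = t, there exist a positive integer n₀ and positive integers (b_j)_{j<n₀} (extending to −∞) such that the bi-infinite sequence (…, b_{n₀−2}, b_{n₀−1}, a_{n₀}, a_{n₀+1}, a_{n₀+2}, …) belongs to Σ_{t+ε}. -/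
open Filter Set MeasureTheory Topology
open scoped ENNReal NNReal

noncomputable section

/-!
Write `x = [0; c 0, c 1, …]` with `c i = a (i + 1)`. The convergent `p_k / q_k` of `x` satisfies
`|x - p_k / q_k| = 1 / (q_k² λ_k)` with `λ_k = [c k; c (k+1), …] + [0; c (k-1), …, c 0]`, so
`k(x) = t` forces `λ_k ≤ t + ε/2` for all large `k`; in particular the partial quotients are
bounded. A bounded sequence has a word of length `2R` occurring at two positions `n₁ < n₂` as far
out as we like. Extending `(a n)_{n ≥ n₁}` to the left periodically with period `n₂ - n₁`, every
window of radius `R` of the extension already occurs in `a` far out, and since `λ_i` depends on the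
terms at distance `> R` from `i` only up to `O(2^{-R})`, each `λ_i` of the extension is within
`ε/2` of some `λ_k ≤ t + ε/2`.
-/

@[simp]
lemma cfListVal_nil : cfListVal [] = 0 := rfl

lemma cfListVal_cons (a : ℕ) (l : List ℕ) : cfListVal (a :: l) = a + (cfListVal l)⁻¹ := by
  rw [cfListVal, one_div]

lemma cfListVal_nonneg (l : List ℕ) : 0 ≤ cfListVal l := by
  induction l with
  | nil => rfl
  | cons a l ih => rw [cfListVal_cons]; positivity

lemma le_cfListVal_cons (a : ℕ) (l : List ℕ) : (a : ℝ) ≤ cfListVal (a :: l) := by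
  rw [cfListVal_cons]
  have := cfListVal_nonneg l
  simp only [le_add_iff_nonneg_right, inv_nonneg, this]

lemma one_le_cfListVal_cons {a : ℕ} (ha : 0 < a) (l : List ℕ) : 1 ≤ cfListVal (a :: l) :=
  le_trans (by exact_mod_cast ha) (le_cfListVal_cons a l)

lemma one_le_cfListVal {l : List ℕ} (hl : ∀ x ∈ l, 0 < x) (hne : l ≠ []) : 1 ≤ cfListVal l := by
  obtain ⟨a, l, rfl⟩ := List.exists_cons_of_ne_nil hne
  exact one_le_cfListVal_cons (hl a List.mem_cons_self) l

lemma inv_cfListVal_mem_Icc {l : List ℕ} (hl : ∀ x ∈ l, 0 < x) :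
    (cfListVal l)⁻¹ ∈ Icc (0 : ℝ) 1 := by
  cases l with
  | nil => simp
  | cons a l =>
    exact ⟨inv_nonneg.mpr (cfListVal_nonneg _),
      inv_le_one_of_one_le₀ (one_le_cfListVal_cons (hl a List.mem_cons_self) l)⟩

lemma abs_inv_cfListVal_sub_le_one {l l' : List ℕ} (hl : ∀ x ∈ l, 0 < x)
    (hl' : ∀ x ∈ l', 0 < x) : |(cfListVal l)⁻¹ - (cfListVal l')⁻¹| ≤ 1 := by
  obtain ⟨h0, h1⟩ := inv_cfListVal_mem_Icc hl
  obtain ⟨h0', h1'⟩ := inv_cfListVal_mem_Icc hl'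
  exact abs_sub_le_iff.mpr ⟨by linarith, by linarith⟩

lemma abs_inv_add_inv_sub_le {a b : ℕ} (ha : 0 < a) (hb : 0 < b) {y y' : ℝ} (hy : 0 ≤ y)
    (hy' : 0 ≤ y') :
    |((a : ℝ) + ((b : ℝ) + y)⁻¹)⁻¹ - ((a : ℝ) + ((b : ℝ) + y')⁻¹)⁻¹| ≤ |y - y'| / 4 := by
  -- `(a + s⁻¹)⁻¹ = s / (a s + 1)`: one step only contracts weakly, two steps by `(a s + 1)² ≥ 4`
  have ha1 : (1 : ℝ) ≤ a := by exact_mod_cast ha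
  have hb1 : (1 : ℝ) ≤ b := by exact_mod_cast hb
  have key : ((a : ℝ) + ((b : ℝ) + y)⁻¹)⁻¹ - ((a : ℝ) + ((b : ℝ) + y')⁻¹)⁻¹ =
      (y - y') / ((a * (b + y) + 1) * (a * (b + y') + 1)) := by
    field_simp
    ring
  have h2 : (2 : ℝ) ≤ a * (b + y) + 1 := by nlinarith
  have h2' : (2 : ℝ) ≤ a * (b + y') + 1 := by nlinarith
  have h4 : (4 : ℝ) ≤ (a * (b + y) + 1) * (a * (b + y') + 1) := by nlinarith
  rw [key, abs_div, abs_of_pos (show (0 : ℝ) < _ * _ from by linarith)]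
  exact div_le_div_of_nonneg_left (abs_nonneg _) (by norm_num) h4

lemma abs_inv_cfListVal_append_sub_le :
    ∀ (w : List ℕ) {l l' : List ℕ}, (∀ x ∈ w, 0 < x) → (∀ x ∈ l, 0 < x) → (∀ x ∈ l', 0 < x) →
      |(cfListVal (w ++ l))⁻¹ - (cfListVal (w ++ l'))⁻¹| ≤ 2 * (1 / 2) ^ w.length
  | [], l, l', _, hl, hl' => by
    simpa using (abs_inv_cfListVal_sub_le_one hl hl').trans one_le_two
  | [a], l, l', hw, hl, hl' => by
    have ha := hw a List.mem_cons_self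
    simpa using abs_inv_cfListVal_sub_le_one (List.forall_mem_cons.mpr ⟨ha, hl⟩)
      (List.forall_mem_cons.mpr ⟨ha, hl'⟩)
  | a :: b :: w, l, l', hw, hl, hl' => by
    simp only [List.forall_mem_cons] at hw
    calc |(cfListVal (a :: b :: w ++ l))⁻¹ - (cfListVal (a :: b :: w ++ l'))⁻¹|
        ≤ |(cfListVal (w ++ l))⁻¹ - (cfListVal (w ++ l'))⁻¹| / 4 := by
          simp only [List.cons_append, cfListVal_cons]
          exact abs_inv_add_inv_sub_le hw.1 hw.2.1 (inv_nonneg.mpr (cfListVal_nonneg _))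
            (inv_nonneg.mpr (cfListVal_nonneg _))
      _ ≤ 2 * (1 / 2) ^ w.length / 4 := by
          gcongr
          exact abs_inv_cfListVal_append_sub_le w hw.2.2 hl hl'
      _ = 2 * (1 / 2) ^ (a :: b :: w).length := by
          simp only [List.length_cons]; ring

lemma abs_cfListVal_cons_append_sub_le (a : ℕ) {w l l' : List ℕ} (hw : ∀ x ∈ w, 0 < x)
    (hl : ∀ x ∈ l, 0 < x) (hl' : ∀ x ∈ l', 0 < x) :
    |cfListVal (a :: (w ++ l)) - cfListVal (a :: (w ++ l'))| ≤ 2 * (1 / 2) ^ w.length := by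
  rw [cfListVal_cons, cfListVal_cons, add_sub_add_left_eq_sub]
  exact abs_inv_cfListVal_append_sub_le w hw hl hl'

def seqPrefix (c : ℕ → ℕ) (k : ℕ) : List ℕ := (List.range k).map c

@[simp]
lemma length_seqPrefix (c : ℕ → ℕ) (k : ℕ) : (seqPrefix c k).length = k := by
  simp [seqPrefix]

lemma seqPrefix_pos {c : ℕ → ℕ} (hc : ∀ i, 0 < c i) (k : ℕ) : ∀ x ∈ seqPrefix c k, 0 < x := by
  simp only [seqPrefix, List.mem_map]
  rintro _ ⟨i, -, rfl⟩
  exact hc i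

lemma seqPrefix_add (c : ℕ → ℕ) (k m : ℕ) :
    seqPrefix c (k + m) = seqPrefix c k ++ seqPrefix (fun i => c (k + i)) m := by
  simp only [seqPrefix, List.range_add, List.map_append, List.map_map]
  rfl

lemma seqPrefix_succ (c : ℕ → ℕ) (k : ℕ) :
    seqPrefix c (k + 1) = c 0 :: seqPrefix (fun i => c (i + 1)) k := by
  simp only [seqPrefix, List.range_succ_eq_map, List.map_cons, List.map_map]
  rfl

lemma seqPrefix_succ' (c : ℕ → ℕ) (k : ℕ) : seqPrefix c (k + 1) = seqPrefix c k ++ [c k] := by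
  simp [seqPrefix, List.range_succ]

lemma seqPrefix_congr {c c' : ℕ → ℕ} {k : ℕ} (h : ∀ i < k, c i = c' i) :
    seqPrefix c k = seqPrefix c' k :=
  List.map_congr_left fun i hi => h i (List.mem_range.mp hi)

lemma reverse_seqPrefix (c : ℕ → ℕ) (k : ℕ) :
    (seqPrefix c k).reverse = seqPrefix (fun i => c (k - 1 - i)) k := by
  apply List.ext_getElem (by simp)
  intro i h1 h2
  simp only [seqPrefix, List.getElem_reverse, List.getElem_map, List.getElem_range,
    List.length_map, List.length_range]

lemma abs_cfListVal_seqPrefix_sub_le {c : ℕ → ℕ} (hc : ∀ i, 0 < c i) {r : List ℕ}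
    (hr : ∀ x ∈ r, 0 < x) {k n : ℕ} (hkn : k ≤ n) :
    |cfListVal (seqPrefix c (n + 1)) - cfListVal (seqPrefix c (k + 1) ++ r)| ≤
      2 * (1 / 2) ^ k := by
  obtain ⟨d, rfl⟩ := Nat.exists_eq_add_of_le hkn
  rw [show k + d + 1 = k + 1 + d by ring, seqPrefix_add, seqPrefix_succ, List.cons_append,
    List.cons_append]
  simpa using abs_cfListVal_cons_append_sub_le (c 0) (seqPrefix_pos (fun i => hc (i + 1)) k)
    (seqPrefix_pos (fun i => hc (k + 1 + i)) d) hr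

lemma tendsto_cfVal {c : ℕ → ℕ} (hc : ∀ i, 0 < c i) :
    Tendsto (fun n => cfListVal (seqPrefix c (n + 1))) atTop (𝓝 (cfVal c)) := by
  refine CauchySeq.tendsto_limUnder
    (cauchySeq_of_le_geometric (1 / 2) 2 (by norm_num) fun n => ?_)
  rw [Real.dist_eq, abs_sub_comm]
  simpa using abs_cfListVal_seqPrefix_sub_le hc (r := []) (by simp) (Nat.le_succ n)

lemma abs_cfVal_sub_cfListVal_le {c : ℕ → ℕ} (hc : ∀ i, 0 < c i) {r : List ℕ}
    (hr : ∀ x ∈ r, 0 < x) (k : ℕ) :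
    |cfVal c - cfListVal (seqPrefix c (k + 1) ++ r)| ≤ 2 * (1 / 2) ^ k :=
  le_of_tendsto ((tendsto_cfVal hc).sub_const _).abs
    (eventually_atTop.mpr ⟨k, fun _ hn => abs_cfListVal_seqPrefix_sub_le hc hr hn⟩)

lemma abs_cfVal_sub_cfVal_le {c c' : ℕ → ℕ} (hc : ∀ i, 0 < c i) (hc' : ∀ i, 0 < c' i) {k : ℕ}
    (h : ∀ i < k + 1, c i = c' i) : |cfVal c - cfVal c'| ≤ 2 * (1 / 2) ^ k := by
  refine le_of_tendsto ((tendsto_cfVal hc').const_sub _).abs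
    (eventually_atTop.mpr ⟨k, fun n hn => ?_⟩)
  obtain ⟨d, rfl⟩ := Nat.exists_eq_add_of_le hn
  rw [show k + d + 1 = k + 1 + d by ring, seqPrefix_add, ← seqPrefix_congr h]
  exact abs_cfVal_sub_cfListVal_le hc (seqPrefix_pos (fun i => hc' _) d) k

lemma le_cfVal {c : ℕ → ℕ} (hc : ∀ i, 0 < c i) : (c 0 : ℝ) ≤ cfVal c :=
  ge_of_tendsto' (tendsto_cfVal hc) fun n => by
    rw [seqPrefix_succ]; exact le_cfListVal_cons _ _

lemma one_le_cfVal {c : ℕ → ℕ} (hc : ∀ i, 0 < c i) : 1 ≤ cfVal c :=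
  le_trans (by exact_mod_cast hc 0) (le_cfVal hc)

lemma cfVal01_eq_inv {c : ℕ → ℕ} (hc : ∀ i, 0 < c (i + 1)) :
    cfVal01 c = (cfVal fun i => c (i + 1))⁻¹ := by
  have hval : ∀ n, cfListVal (seqPrefix (fun n => if n = 0 then 0 else c n) (n + 1 + 1)) =
      (cfListVal (seqPrefix (fun i => c (i + 1)) (n + 1)))⁻¹ := fun n => by
    rw [seqPrefix_succ, cfListVal_cons]
    simp
  have hlim := ((tendsto_cfVal hc).inv₀ (zero_lt_one.trans_le (one_le_cfVal hc)).ne').congr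
    fun n => (hval n).symm
  exact ((tendsto_add_atTop_iff_nat 1).mp hlim).limUnder_eq

/-- For `x = [0; c 0, c 1, …]`, `cfMat (seqPrefix c k) = !![q_k, q_{k-1}; p_k, p_{k-1}]` in terms
of the convergents `p_k / q_k` of `x`. -/
def cfMat (l : List ℕ) : Matrix (Fin 2) (Fin 2) ℕ := (l.map fun a => !![a, 1; 1, 0]).prod

@[simp]
lemma cfMat_nil : cfMat [] = 1 := rfl

lemma cfMat_cons (a : ℕ) (l : List ℕ) : cfMat (a :: l) = !![a, 1; 1, 0] * cfMat l := by
  simp [cfMat]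

lemma cfMat_append (w l : List ℕ) : cfMat (w ++ l) = cfMat w * cfMat l := by
  simp [cfMat]

open Matrix in
lemma cfMat_reverse (l : List ℕ) : cfMat l.reverse = (cfMat l)ᵀ := by
  simp only [cfMat, transpose_list_prod, List.map_reverse, List.map_map]
  congr 3
  ext a i j
  fin_cases i <;> fin_cases j <;> rfl

lemma cfMat_cons_apply (a : ℕ) (l : List ℕ) :
    cfMat (a :: l) 0 0 = a * cfMat l 0 0 + cfMat l 1 0 ∧
    cfMat (a :: l) 0 1 = a * cfMat l 0 1 + cfMat l 1 1 ∧
    cfMat (a :: l) 1 0 = cfMat l 0 0 ∧ cfMat (a :: l) 1 1 = cfMat l 0 1 := by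
  simp [cfMat_cons, Matrix.mul_apply, Fin.sum_univ_two]

lemma cfMat_append_singleton_apply (w : List ℕ) (a : ℕ) :
    cfMat (w ++ [a]) 0 0 = cfMat w 0 0 * a + cfMat w 0 1 ∧
    cfMat (w ++ [a]) 1 0 = cfMat w 1 0 * a + cfMat w 1 1 := by
  simp [cfMat_append, cfMat_cons, Matrix.mul_apply, Fin.sum_univ_two]

lemma cfMat_det (l : List ℕ) :
    (cfMat l 0 0 : ℤ) * cfMat l 1 1 - cfMat l 0 1 * cfMat l 1 0 = (-1) ^ l.length := by
  induction l with
  | nil => simp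
  | cons a l ih =>
    obtain ⟨h00, h01, h10, h11⟩ := cfMat_cons_apply a l
    rw [h00, h01, h10, h11, List.length_cons, pow_succ, ← ih]
    push_cast
    ring

lemma one_le_cfMat_zero_zero {l : List ℕ} (hl : ∀ x ∈ l, 0 < x) : 1 ≤ cfMat l 0 0 := by
  induction l with
  | nil => simp
  | cons a l ih =>
    simp only [List.forall_mem_cons] at hl
    rw [(cfMat_cons_apply a l).1]
    nlinarith [ih hl.2, hl.1]

lemma one_le_cfMat_zero_one {l : List ℕ} (hl : ∀ x ∈ l, 0 < x) (hne : l ≠ []) :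
    1 ≤ cfMat l 0 1 := by
  obtain ⟨w, a, rfl⟩ := List.eq_nil_or_concat' l |>.resolve_left hne
  have h : cfMat (w ++ [a]) 0 1 = cfMat (a :: w.reverse) 1 0 := by
    rw [← List.reverse_concat', cfMat_reverse]; rfl
  rw [h, (cfMat_cons_apply _ _).2.2.1]
  exact one_le_cfMat_zero_zero fun x hx => hl x (by simp_all)

lemma coprime_cfMat (l : List ℕ) : Nat.Coprime (cfMat l 1 0) (cfMat l 0 0) := by
  rw [← Nat.isCoprime_iff_coprime]
  refine ⟨-(-1) ^ l.length * cfMat l 0 1, (-1) ^ l.length * cfMat l 1 1, ?_⟩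
  have hsq : ((-1 : ℤ) ^ l.length) ^ 2 = 1 := by rw [← pow_mul, mul_comm, pow_mul]; simp
  linear_combination (-1) ^ l.length * cfMat_det l + hsq

lemma inv_cfListVal_append {w l : List ℕ} (hw : ∀ x ∈ w, 0 < x) (hl : ∀ x ∈ l, 0 < x)
    (hne : l ≠ []) :
    (cfListVal (w ++ l))⁻¹ = (cfMat w 1 0 * cfListVal l + cfMat w 1 1) /
      (cfMat w 0 0 * cfListVal l + cfMat w 0 1) := by
  have hT := one_le_cfListVal hl hne
  induction w with
  | nil => simp
  | cons a w ih =>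
    simp only [List.forall_mem_cons] at hw
    have hA : (1 : ℝ) ≤ cfMat w 0 0 := by exact_mod_cast one_le_cfMat_zero_zero hw.2
    have hden : (0 : ℝ) < cfMat w 0 0 * cfListVal l + cfMat w 0 1 := by
      have : (0 : ℝ) ≤ cfMat w 0 1 := by positivity
      nlinarith
    obtain ⟨h00, h01, h10, h11⟩ := cfMat_cons_apply a w
    rw [List.cons_append, cfListVal_cons, ih hw.2, h00, h01, h10, h11]
    push_cast
    field_simp
    ring

lemma inv_cfListVal_eq_div {w : List ℕ} (hw : ∀ x ∈ w, 0 < x) :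
    (cfListVal w)⁻¹ = cfMat w 1 0 / cfMat w 0 0 := by
  rcases List.eq_nil_or_concat' w with rfl | ⟨w, a, rfl⟩
  · simp
  · have hw' : ∀ x ∈ w, 0 < x := fun x hx => hw x (List.mem_append_left _ hx)
    rw [inv_cfListVal_append hw' (fun x hx => hw x (List.mem_append_right _ hx)) (by simp),
      (cfMat_append_singleton_apply w a).1, (cfMat_append_singleton_apply w a).2]
    simp [cfListVal_cons]

lemma inv_cfVal_eq {c : ℕ → ℕ} (hc : ∀ i, 0 < c i) (k : ℕ) :
    (cfVal c)⁻¹ =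
      (cfMat (seqPrefix c k) 1 0 * cfVal (fun i => c (k + i)) + cfMat (seqPrefix c k) 1 1) /
        (cfMat (seqPrefix c k) 0 0 * cfVal (fun i => c (k + i)) + cfMat (seqPrefix c k) 0 1) := by
  set w := seqPrefix c k
  have htail : ∀ i, 0 < c (k + i) := fun i => hc _
  have hden : (0 : ℝ) < cfMat w 0 0 * cfVal (fun i => c (k + i)) + cfMat w 0 1 := by
    have : (1 : ℝ) ≤ cfMat w 0 0 := by
      exact_mod_cast one_le_cfMat_zero_zero (seqPrefix_pos hc k)
    have := one_le_cfVal htail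
    positivity
  have hlim :
      Tendsto (fun n => (cfListVal (seqPrefix c (k + n + 1)))⁻¹) atTop (𝓝 (cfVal c)⁻¹) :=
    ((tendsto_cfVal hc).comp (tendsto_add_atTop_nat k) |>.congr fun n => by
      simp [add_comm]).inv₀ (zero_lt_one.trans_le (one_le_cfVal hc)).ne'
  refine tendsto_nhds_unique hlim ?_
  refine (((tendsto_cfVal htail).const_mul _).add_const _ |>.div
    (((tendsto_cfVal htail).const_mul _).add_const _) hden.ne').congr fun n => ?_
  rw [add_assoc, seqPrefix_add, inv_cfListVal_append (seqPrefix_pos hc k)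
    (seqPrefix_pos htail _) (List.ne_nil_of_length_pos (by simp))]
  rfl

/-- The one-sided analogue of `lambdaZ`: `[c k; c (k+1), …] + [0; c (k-1), …, c 0]`. -/
def lambdaN (c : ℕ → ℕ) (k : ℕ) : ℝ :=
  cfVal (fun i => c (k + i)) + (cfListVal (seqPrefix c k).reverse)⁻¹

lemma lambdaN_eq {c : ℕ → ℕ} (hc : ∀ i, 0 < c i) (k : ℕ) :
    lambdaN c k = cfVal (fun i => c (k + i)) +
      cfMat (seqPrefix c k) 0 1 / cfMat (seqPrefix c k) 0 0 := by
  rw [lambdaN, inv_cfListVal_eq_div fun x hx => seqPrefix_pos hc k x (List.mem_reverse.mp hx),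
    cfMat_reverse]
  rfl

lemma le_lambdaN {c : ℕ → ℕ} (hc : ∀ i, 0 < c i) (k : ℕ) : (c k : ℝ) ≤ lambdaN c k := by
  have h := le_cfVal fun i => hc (k + i)
  have : 0 ≤ (cfListVal (seqPrefix c k).reverse)⁻¹ := inv_nonneg.mpr (cfListVal_nonneg _)
  rw [lambdaN]
  simp only [add_zero] at h
  linarith

def cfConvergent (c : ℕ → ℕ) (k : ℕ) : ℚ :=
  (cfMat (seqPrefix c k) 1 0 : ℚ) / cfMat (seqPrefix c k) 0 0

lemma den_cfConvergent {c : ℕ → ℕ} (hc : ∀ i, 0 < c i) (k : ℕ) :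
    (cfConvergent c k).den = cfMat (seqPrefix c k) 0 0 := by
  have hA := one_le_cfMat_zero_zero (seqPrefix_pos hc k)
  have h := Rat.den_div_eq_of_coprime (a := cfMat (seqPrefix c k) 1 0)
    (b := cfMat (seqPrefix c k) 0 0) (by omega) (by simpa using coprime_cfMat _)
  rw [cfConvergent, ← Int.cast_natCast (cfMat _ 1 0), ← Int.cast_natCast (cfMat _ 0 0)]
  exact Int.ofNat_inj.mp h

lemma abs_inv_cfVal_sub_cfConvergent {c : ℕ → ℕ} (hc : ∀ i, 0 < c i) (k : ℕ) :
    |(cfVal c)⁻¹ - cfConvergent c k| =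
      1 / ((cfMat (seqPrefix c k) 0 0 : ℝ) ^ 2 * lambdaN c k) := by
  have hdet := cfMat_det (seqPrefix c k)
  have hA := one_le_cfMat_zero_zero (seqPrefix_pos hc k)
  have hα := one_le_cfVal fun i => hc (k + i)
  rw [length_seqPrefix] at hdet
  rw [inv_cfVal_eq hc k, lambdaN_eq hc k, cfConvergent, Rat.cast_div, Rat.cast_natCast,
    Rat.cast_natCast]
  set M := cfMat (seqPrefix c k)
  set α := cfVal fun i => c (k + i)
  have hdetR : (M 0 0 : ℝ) * M 1 1 - M 0 1 * M 1 0 = (-1) ^ k := by exact_mod_cast hdet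
  have hAR : (1 : ℝ) ≤ M 0 0 := by exact_mod_cast hA
  have key : (M 1 0 * α + M 1 1 : ℝ) / (M 0 0 * α + M 0 1) - M 1 0 / M 0 0 =
      (-1) ^ k / ((M 0 0 : ℝ) ^ 2 * (α + M 0 1 / M 0 0)) := by
    rw [← hdetR]
    field_simp
    ring
  rw [key, abs_div, abs_pow, abs_neg, abs_one, one_pow, abs_of_pos (by positivity)]

lemma cfConvergent_mem_diophSols {c : ℕ → ℕ} (hc : ∀ i, 0 < c i) {s : ℝ} (hs : 0 < s) {k : ℕ}
    (hsk : s < lambdaN c k) : cfConvergent c k ∈ diophSols s (cfVal c)⁻¹ := by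
  have hA : (1 : ℝ) ≤ cfMat (seqPrefix c k) 0 0 := by
    exact_mod_cast one_le_cfMat_zero_zero (seqPrefix_pos hc k)
  rw [diophSols, mem_ofPred_eq, abs_inv_cfVal_sub_cfConvergent hc k, den_cfConvergent hc k,
    mul_comm s]
  gcongr

lemma strictMono_cfMat_seqPrefix_succ {c : ℕ → ℕ} (hc : ∀ i, 0 < c i) :
    StrictMono fun k => cfMat (seqPrefix c (k + 1)) 0 0 := by
  refine strictMono_nat_of_lt_succ fun k => ?_
  have hB :=
    one_le_cfMat_zero_one (seqPrefix_pos hc (k + 1)) (List.ne_nil_of_length_pos (by simp))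
  have hc' := hc (k + 1)
  rw [seqPrefix_succ' c (k + 1), (cfMat_append_singleton_apply _ _).1]
  nlinarith

lemma cfConvergent_injOn {c : ℕ → ℕ} (hc : ∀ i, 0 < c i) : InjOn (cfConvergent c) (Ici 1) := by
  rintro k hk k' hk' h
  obtain ⟨m, rfl⟩ := Nat.exists_eq_add_of_le' hk
  obtain ⟨m', rfl⟩ := Nat.exists_eq_add_of_le' hk'
  have hden := congrArg Rat.den h
  rw [den_cfConvergent hc, den_cfConvergent hc] at hden
  exact congrArg (· + 1) ((strictMono_cfMat_seqPrefix_succ hc).injective hden)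

lemma ofReal_le_kval {s x : ℝ} (hs : 0 < s) (h : (diophSols s x).Infinite) :
    ENNReal.ofReal s ≤ kval x :=
  le_sSup ⟨s, ⟨hs, h⟩, rfl⟩

lemma eventually_lambdaN_le {c : ℕ → ℕ} (hc : ∀ i, 0 < c i) {s s' : ℝ}
    (hs : kval (cfVal c)⁻¹ ≤ ENNReal.ofReal s) (hss' : s < s') :
    ∀ᶠ k in atTop, lambdaN c k ≤ s' := by
  by_contra h
  -- raising `s'` to be positive keeps infinitely many `lambdaN c k` above it, as `lambdaN ≥ 1`
  set s'' := max s' (1 / 2)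
  have hs'' : 0 < s'' := lt_max_of_lt_right one_half_pos
  have hfreq : {k | s'' < lambdaN c k}.Infinite := by
    refine Nat.frequently_atTop_iff_infinite.mp ((not_eventually.mp h).mono fun k hk => ?_)
    have : (1 : ℝ) ≤ lambdaN c k := le_trans (by exact_mod_cast hc k) (le_lambdaN hc k)
    exact max_lt (not_le.mp hk) (by linarith)
  have hsols : (diophSols s'' (cfVal c)⁻¹).Infinite :=
    ((hfreq.sdiff (finite_Iio 1)).image ((cfConvergent_injOn hc).mono fun k hk =>
      Nat.one_le_iff_ne_zero.mpr (by simpa using hk.2))).mono (image_subset_iff.mpr fun k hk =>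
        cfConvergent_mem_diophSols hc hs'' hk.1)
  have hle : ENNReal.ofReal s'' ≤ ENNReal.ofReal s :=
    (ofReal_le_kval hs'' hsols).trans hs
  rcases ENNReal.ofReal_le_ofReal_iff'.mp hle with h' | h'
  · linarith [le_max_left s' (1 / 2)]
  · linarith

lemma abs_inv_sub_inv_le {u v : ℝ} (hu : 1 ≤ u) (hv : 1 ≤ v) : |u⁻¹ - v⁻¹| ≤ |u - v| := by
  rw [inv_sub_inv (by positivity) (by positivity), abs_div, abs_sub_comm,
    abs_of_pos (by positivity : 0 < u * v)]
  exact div_le_self (abs_nonneg _) (one_le_mul_of_one_le_of_one_le hu hv)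

lemma abs_lambdaZ_sub_lambdaN_le {b : ℤ → ℕ} {c : ℕ → ℕ} (hb : ∀ j, 0 < b j)
    (hc : ∀ k, 0 < c k) {i : ℤ} {M L : ℕ} (hLM : L + 1 ≤ M)
    (hbc : ∀ j : ℤ, |j| ≤ L + 1 → b (i + j) = c (M + j).toNat) :
    |lambdaZ i b - lambdaN c M| ≤ 4 * (1 / 2) ^ L := by
  have hfwd : |cfVal (fun n => b (i + n)) - cfVal (fun n => c (M + n))| ≤ 2 * (1 / 2) ^ L :=
    abs_cfVal_sub_cfVal_le (fun _ => hb _) (fun _ => hc _) fun n hn => by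
      rw [hbc n (by rw [abs_of_nonneg (by positivity)]; omega)]
      rfl
  set d : ℕ → ℕ := fun n => b (i - (n + 1))
  have hd : ∀ n, 0 < d n := fun _ => hb _
  have h01 : cfVal01 (fun n => b (i - n)) = (cfVal d)⁻¹ := by
    simpa using cfVal01_eq_inv (c := fun n : ℕ => b (i - n)) fun _ => hb _
  have hpast : (seqPrefix c M).reverse =
      seqPrefix d (L + 1) ++ seqPrefix (fun n => c (M - 1 - (L + 1 + n))) (M - (L + 1)) := by
    rw [reverse_seqPrefix, ← Nat.add_sub_cancel' hLM, seqPrefix_add, Nat.add_sub_cancel' hLM]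
    refine congrArg (· ++ _) (seqPrefix_congr fun n hn => ?_)
    have := hbc (-(n + 1)) (by rw [abs_neg, abs_of_nonneg (by positivity)]; omega)
    simp only [← sub_eq_add_neg] at this
    simp only [d, this]
    congr 1; omega
  have hbwd : |(cfVal d)⁻¹ - (cfListVal (seqPrefix c M).reverse)⁻¹| ≤ 2 * (1 / 2) ^ L := by
    refine (abs_inv_sub_inv_le (one_le_cfVal hd) (one_le_cfListVal ?_ ?_)).trans ?_
    · exact fun x hx => seqPrefix_pos hc M x (List.mem_reverse.mp hx)
    · exact List.reverse_ne_nil_iff.mpr (List.ne_nil_of_length_pos (by simp; omega))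
    · rw [hpast]
      exact abs_cfVal_sub_cfListVal_le hd (seqPrefix_pos (fun _ => hc _) _) L
  rw [lambdaZ, lambdaN, h01]
  calc _ = |(cfVal (fun n => b (i + n)) - cfVal (fun n => c (M + n))) +
        ((cfVal d)⁻¹ - (cfListVal (seqPrefix c M).reverse)⁻¹)| := by ring_nf
    _ ≤ _ := (abs_add_le _ _).trans (by linarith)

lemma finite_range_of_eventually_le {a : ℕ → ℕ} {T : ℝ} (h : ∀ᶠ k in atTop, (a k : ℝ) ≤ T) :
    (range a).Finite :=
  finite_iff_bddAbove.mpr (isBoundedUnder_of_eventually_le (a := ⌈T⌉₊)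
    (h.mono fun k hk => by exact_mod_cast hk.trans (Nat.le_ceil T))).bddAbove_range

def periodicExtension (a : ℕ → ℕ) (n P : ℕ) (j : ℤ) : ℕ :=
  if (n : ℤ) ≤ j then a j.toNat else a (n + ((j - n) % P).toNat)

lemma periodicExtension_of_le (a : ℕ → ℕ) {n : ℕ} (P : ℕ) {j : ℤ} (hj : n ≤ j) :
    periodicExtension a n P j = a j.toNat :=
  if_pos hj

lemma range_periodicExtension_subset (a : ℕ → ℕ) (n P : ℕ) :
    range (periodicExtension a n P) ⊆ range a := by
  rintro _ ⟨j, rfl⟩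
  unfold periodicExtension
  split_ifs <;> exact mem_range_self _

lemma periodicExtension_add_period (a : ℕ → ℕ) {n P : ℕ} {j : ℤ} (hj : j < n) :
    periodicExtension a n P j = periodicExtension a n P (j + P) := by
  have hmod : (j + P - n) % (P : ℤ) = (j - n) % P := by
    rw [add_sub_right_comm, Int.add_emod_right]
  unfold periodicExtension
  rw [if_neg (not_le.mpr hj)]
  split_ifs with h
  · rw [← hmod, Int.emod_eq_of_lt (by omega) (by omega)]
    congr 1; omega
  · rw [hmod]

lemma exists_window_of_periodic {b : ℤ → ℕ} {n P R : ℤ} (hP : 0 < P)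
    (hper : ∀ j < n + 2 * R, b j = b (j + P)) (i : ℤ) :
    ∃ m, n + R ≤ m ∧ ∀ j, |j| ≤ R → b (i + j) = b (m + j) := by
  induction h : (n + R - i).toNat using Nat.strong_induction_on generalizing i with
  | _ d ih =>
    by_cases hi : n + R ≤ i
    · exact ⟨i, hi, fun _ _ => rfl⟩
    · obtain ⟨m, hm, hwin⟩ := ih _ (by omega) (i + P) rfl
      refine ⟨m, hm, fun j hj => ?_⟩
      rw [hper (i + j) (by linarith [(abs_le.mp hj).2]), ← hwin j hj, add_right_comm]

lemma exists_lt_forall_eq_of_finite_range {a : ℕ → ℕ} (ha : (range a).Finite) (N K : ℕ) :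
    ∃ n₁ n₂, N ≤ n₁ ∧ n₁ < n₂ ∧ ∀ k < K, a (n₁ + k) = a (n₂ + k) := by
  have := ha.to_subtype
  obtain ⟨x, -, y, -, hxy, hf⟩ := Set.infinite_univ.exists_lt_map_eq_of_mapsTo
    (mapsTo_univ (fun n (k : Fin K) => (⟨a (N + n + k), mem_range_self _⟩ : range a)) univ)
    finite_univ
  exact ⟨N + x, N + y, by omega, by omega,
    fun k hk => congrArg Subtype.val (congrFun hf ⟨k, hk⟩)⟩

lemma exists_extension_with_windows {a : ℕ → ℕ} (ha : (range a).Finite) (N R : ℕ) :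
    ∃ n₀ : ℕ, N ≤ n₀ ∧ ∃ b : ℤ → ℕ, (∀ j : ℤ, n₀ ≤ j → b j = a j.toNat) ∧
      range b ⊆ range a ∧
      ∀ i : ℤ, ∃ M : ℕ, N + R ≤ M ∧ ∀ j : ℤ, |j| ≤ R → b (i + j) = a (M + j).toNat := by
  obtain ⟨n₁, n₂, hN, hlt, hword⟩ := exists_lt_forall_eq_of_finite_range ha N (2 * R)
  set b := periodicExtension a n₁ (n₂ - n₁)
  have hper : ∀ j : ℤ, j < n₁ + 2 * R → b j = b (j + (n₂ - n₁ : ℕ)) := fun j hj => by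
    by_cases h : j < n₁
    · exact periodicExtension_add_period a h
    · obtain ⟨k, rfl⟩ : ∃ k : ℕ, j = n₁ + k := ⟨(j - n₁).toNat, by omega⟩
      simp only [b]
      rw [periodicExtension_of_le _ _ (by omega), periodicExtension_of_le _ _ (by omega)]
      convert hword k (by omega) using 2 <;> omega
  refine ⟨n₁, hN, b, fun j hj => periodicExtension_of_le _ _ hj,
    range_periodicExtension_subset _ _ _, fun i => ?_⟩
  obtain ⟨m, hm, hwin⟩ := exists_window_of_periodic (by omega) hper i
  refine ⟨m.toNat, by omega, fun j hj => ?_⟩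
  rw [hwin j hj]
  simp only [b]
  rw [periodicExtension_of_le _ _ (by linarith [(abs_le.mp hj).1])]
  congr 2; omega

theorem stmt_9_general (t : ℝ) (ε : ℝ) (hε : 0 < ε) (x : ℝ)
    (a : ℕ → ℕ) (ha : ∀ i, 0 < a i) (hxa : x = cfVal01 a)
    (hkx : kval x = ENNReal.ofReal t) :
    ∃ n₀ : ℕ, 0 < n₀ ∧ ∃ b : ℤ → ℕ,
      (∀ j : ℤ, (n₀ : ℤ) ≤ j → b j = a j.toNat) ∧ b ∈ SigmaT (t + ε) := by
  set c : ℕ → ℕ := fun i => a (i + 1)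
  have hc : ∀ i, 0 < c i := fun i => ha (i + 1)
  rw [hxa, cfVal01_eq_inv fun i => ha (i + 1)] at hkx
  obtain ⟨L, hL⟩ : ∃ L : ℕ, (1 / 2 : ℝ) ^ L < ε / 8 :=
    exists_pow_lt_of_lt_one (by positivity) (by norm_num)
  obtain ⟨N, hN⟩ := eventually_atTop.mp
    (eventually_lambdaN_le hc hkx.le (by linarith : t < t + ε / 2))
  have hfin : (range a).Finite := finite_range_of_eventually_le (T := t + ε / 2)
    (eventually_atTop.mpr ⟨N + 1, fun k hk => by
      obtain ⟨k, rfl⟩ := Nat.exists_eq_add_of_le' (le_of_add_le_right hk)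
      exact (le_lambdaN hc k).trans (hN k (by omega))⟩)
  obtain ⟨n₀, hn₀, b, hba, hrange, hwin⟩ := exists_extension_with_windows hfin (N + 1) (L + 1)
  have hb : ∀ j, 0 < b j := fun j =>
    let ⟨k, hk⟩ := hrange (mem_range_self j); hk ▸ ha k
  refine ⟨n₀, by omega, b, hba, hb, fun i => ?_⟩
  obtain ⟨M, hM, hbM⟩ := hwin i
  have hclose := abs_lambdaZ_sub_lambdaN_le (c := c) (M := M - 1) (L := L) hb hc (by omega)
    fun j hj => by
      have := abs_le.mp hj
      rw [hbM j (by exact_mod_cast hj)]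
      congr 1; omega
  linarith [(abs_le.mp hclose).2, hN (M - 1) (by omega)]

/-- If `t` is in the Lagrange spectrum, `ε > 0`, and `x = [0; a 1, a 2, …] ∈ (0,1)` is an
irrational with `k(x) = t`, then there are `n₀ ≥ 1` and a bi-infinite sequence of positive
integers agreeing with `(a_n)` from position `n₀` on which lies in `Σ_{t+ε}`. -/
theorem stmt_9 (t : ℝ) (ht : ∃ y : ℝ, Irrational y ∧ kval y = ENNReal.ofReal t)
    (ε : ℝ) (hε : 0 < ε) (x : ℝ) (hx : x ∈ Set.Ioo (0 : ℝ) 1) (hxirr : Irrational x)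
    (a : ℕ → ℕ) (ha : ∀ i, 0 < a i) (hxa : x = cfVal01 a)
    (hkx : kval x = ENNReal.ofReal t) :
    ∃ n₀ : ℕ, 0 < n₀ ∧ ∃ b : ℤ → ℕ,
      (∀ j : ℤ, (n₀ : ℤ) ≤ j → b j = a j.toNat) ∧ b ∈ SigmaT (t + ε) :=
  stmt_9_general t ε hε x a ha hxa hkx
end
end
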